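/- arXiv:2205.10177 — 6 statements merged into one kernel-verified Lean document; each statement's English description precedes it below -/
import Mathlib

section
/- For every w ∈ L²(0,∞), the function x ↦ cosh(x)·∫ₓ^∞ sech(t)·w(t) dt belongs to L²(0,∞) and its L²(0,∞)-norm is at most 2‖w‖_{L²(0,∞)}; likewise, for every w ∈ L²(-∞,0), the function x ↦ cosh(x)·∫_{-∞}^x sech(t)·w(t) dt belongs to L²(-∞,0) with norm at most 2‖w‖_{L²(-∞,0)}. -/
/-!
Cauchy–Schwarz with the weight `sech` gives, for `x ≥ 0`,
`|∫ₓ^∞ sech t w t dt|² ≤ (∫ₓ^∞ sech) (∫ₓ^∞ sech |w|²) ≤ 2e^{-x} ∫ₓ^∞ sech |w|²`,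
and `cosh² x · 2e^{-x} ≤ 2eˣ`. Integrating over `x > 0` and exchanging the order of integration,
`|w t|²` ends up weighted by `sech t ∫₀ᵗ 2eˣ dx ≤ 2eᵗ sech t ≤ 4`. The half-line `(-∞, 0)` is the
mirror image under `t ↦ -t`.
-/

open MeasureTheory Real Filter Set
open scoped ENNReal

namespace Real

lemma inv_cosh_le_two_mul_exp_neg (t : ℝ) : (cosh t)⁻¹ ≤ 2 * exp (-t) := by
  rw [inv_le_comm₀ (cosh_pos t) (by positivity), mul_inv, exp_neg, inv_inv, cosh_eq]
  linarith [exp_pos (-t)]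

lemma inv_cosh_mul_exp_le_two (t : ℝ) : (cosh t)⁻¹ * exp t ≤ 2 := by
  calc (cosh t)⁻¹ * exp t ≤ 2 * exp (-t) * exp t := by
        gcongr; exact inv_cosh_le_two_mul_exp_neg t
    _ = 2 := by rw [mul_assoc, ← exp_add, neg_add_cancel, exp_zero, mul_one]

lemma cosh_sq_mul_exp_neg_le {x : ℝ} (hx : 0 ≤ x) : cosh x ^ 2 * exp (-x) ≤ exp x := by
  have hcosh : cosh x ≤ exp x := by
    rw [cosh_eq]
    linarith [exp_le_exp.mpr (neg_le_self hx)]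
  calc cosh x ^ 2 * exp (-x) ≤ exp x ^ 2 * exp (-x) := by gcongr
    _ = exp x := by rw [sq, mul_assoc, ← exp_add, add_neg_cancel, exp_zero, mul_one]

end Real

lemma integrableOn_inv_cosh_Ioi (x : ℝ) :
    IntegrableOn (fun t => (cosh t)⁻¹) (Ioi x) := by
  refine ((integrableOn_exp_neg_Ioi x).const_mul 2).mono' ?_ (Eventually.of_forall fun t => ?_)
  · exact (continuous_cosh.inv₀ fun t => (cosh_pos t).ne').aestronglyMeasurable
  · rw [norm_of_nonneg (inv_pos.mpr (cosh_pos t)).le]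
    exact inv_cosh_le_two_mul_exp_neg t

lemma memLp_two_inv_cosh_Ioi (x : ℝ) :
    MemLp (fun t => (cosh t)⁻¹) 2 (volume.restrict (Ioi x)) := by
  have hc : Continuous fun t => (cosh t)⁻¹ := continuous_cosh.inv₀ fun t => (cosh_pos t).ne'
  rw [memLp_two_iff_integrable_sq hc.aestronglyMeasurable]
  refine (integrableOn_inv_cosh_Ioi x).mono' (hc.pow 2).aestronglyMeasurable
    (Eventually.of_forall fun t => ?_)
  have hpos : 0 < (cosh t)⁻¹ := inv_pos.mpr (cosh_pos t)
  have hle : (cosh t)⁻¹ ≤ 1 := inv_le_one_of_one_le₀ (one_le_cosh t)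
  rw [norm_of_nonneg (by positivity)]
  nlinarith

lemma lintegral_inv_cosh_Ioi_le (x : ℝ) :
    ∫⁻ t in Ioi x, ENNReal.ofReal (cosh t)⁻¹ ≤ 2 * ENNReal.ofReal (exp (-x)) := by
  rw [← ENNReal.ofReal_ofNat 2, ← ENNReal.ofReal_mul zero_le_two,
    ← ofReal_integral_eq_lintegral_ofReal (integrableOn_inv_cosh_Ioi x)
    (Eventually.of_forall fun t => (inv_pos.mpr (cosh_pos t)).le)]
  refine ENNReal.ofReal_le_ofReal ?_
  calc ∫ t in Ioi x, (cosh t)⁻¹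
      ≤ ∫ t in Ioi x, 2 * exp (-t) :=
        setIntegral_mono (integrableOn_inv_cosh_Ioi x) ((integrableOn_exp_neg_Ioi x).const_mul 2)
          inv_cosh_le_two_mul_exp_neg
    _ = 2 * exp (-x) := by rw [integral_const_mul, integral_exp_neg_Ioi]

lemma lintegral_exp_Iic (x : ℝ) :
    ∫⁻ t in Iic x, ENNReal.ofReal (exp t) = ENNReal.ofReal (exp x) := by
  rw [← ofReal_integral_eq_lintegral_ofReal (integrableOn_exp_Iic x)
    (Eventually.of_forall fun t => (exp_pos t).le), integral_exp_Iic]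

lemma lintegral_Ioo_exp_mul_inv_cosh_le (a t : ℝ) :
    (∫⁻ x in Ioo a t, ENNReal.ofReal (exp x)) * ENNReal.ofReal (cosh t)⁻¹ ≤ 2 := by
  calc (∫⁻ x in Ioo a t, ENNReal.ofReal (exp x)) * ENNReal.ofReal (cosh t)⁻¹
      ≤ ENNReal.ofReal (exp t) * ENNReal.ofReal (cosh t)⁻¹ := by
        gcongr
        exact (lintegral_mono_set Ioo_subset_Iio_self |>.trans
          (lintegral_mono_set Iio_subset_Iic_self)).trans_eq (lintegral_exp_Iic t)
    _ = ENNReal.ofReal ((cosh t)⁻¹ * exp t) := by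
        rw [← ENNReal.ofReal_mul (exp_pos t).le, mul_comm]
    _ ≤ 2 := by
        simpa using ENNReal.ofReal_le_ofReal (inv_cosh_mul_exp_le_two t)

lemma lintegral_mul_sq_le {α : Type*} [MeasurableSpace α] {μ : Measure α} {a f : α → ℝ≥0∞}
    (ha : AEMeasurable a μ) (hf : AEMeasurable f μ) :
    (∫⁻ x, a x * f x ∂μ) ^ 2 ≤ (∫⁻ x, a x ∂μ) * ∫⁻ x, a x * f x ^ 2 ∂μ := by
  have hsplit : ∀ x, a x * f x = a x ^ (2⁻¹ : ℝ) * (a x * f x ^ 2) ^ (2⁻¹ : ℝ) := by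
    intro x
    rw [ENNReal.mul_rpow_of_nonneg _ _ (by norm_num), ← mul_assoc,
      ← ENNReal.rpow_add_of_nonneg _ _ (by norm_num) (by norm_num), ← ENNReal.rpow_natCast,
      ← ENNReal.rpow_mul]
    norm_num
  have hholder := ENNReal.lintegral_mul_norm_pow_le ha (ha.mul (hf.pow_const 2))
    (p := 2⁻¹) (q := 2⁻¹) (by norm_num) (by norm_num) (by norm_num)
  calc (∫⁻ x, a x * f x ∂μ) ^ 2
      = (∫⁻ x, a x ^ (2⁻¹ : ℝ) * (a x * f x ^ 2) ^ (2⁻¹ : ℝ) ∂μ) ^ 2 := by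
        rw [lintegral_congr hsplit]
    _ ≤ ((∫⁻ x, a x ∂μ) ^ (2⁻¹ : ℝ) * (∫⁻ x, a x * f x ^ 2 ∂μ) ^ (2⁻¹ : ℝ)) ^ 2 :=
        pow_le_pow_left₀ (by positivity) hholder 2
    _ = (∫⁻ x, a x ∂μ) * ∫⁻ x, a x * f x ^ 2 ∂μ := by
        rw [mul_pow, ← ENNReal.rpow_natCast, ← ENNReal.rpow_natCast, ← ENNReal.rpow_mul,
          ← ENNReal.rpow_mul]
        norm_num

lemma lintegral_Ioi_mul_lintegral_Ioi {μ : Measure ℝ} [SFinite μ] {g f : ℝ → ℝ≥0∞} (a : ℝ)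
    (hg : Measurable g) (hf : AEMeasurable f (μ.restrict (Ioi a))) :
    ∫⁻ x in Ioi a, g x * ∫⁻ t in Ioi x, f t ∂μ ∂μ =
      ∫⁻ t in Ioi a, (∫⁻ x in Ioo a t, g x ∂μ) * f t ∂μ := by
  set K : ℝ → ℝ → ℝ≥0∞ := fun x t => g x * (Ioi x).indicator f t
  have hK : AEMeasurable (Function.uncurry K) ((μ.restrict (Ioi a)).prod (μ.restrict (Ioi a))) := by
    have hK_eq : Function.uncurry K =
        fun p => g p.1 * {p : ℝ × ℝ | p.1 < p.2}.indicator (fun p => f p.2) p := by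
      ext ⟨x, t⟩
      simp [K, indicator_apply]
    rw [hK_eq]
    exact (hg.comp measurable_fst).aemeasurable.mul
      (hf.comp_snd.indicator (measurableSet_lt measurable_fst measurable_snd))
  have hleft : ∀ x ∈ Ioi a, g x * ∫⁻ t in Ioi x, f t ∂μ = ∫⁻ t in Ioi a, K x t ∂μ := by
    intro x hx
    rw [lintegral_const_mul'' _ (hf.indicator measurableSet_Ioi),
      lintegral_indicator measurableSet_Ioi, Measure.restrict_restrict measurableSet_Ioi,
      inter_eq_self_of_subset_left (Ioi_subset_Ioi (le_of_lt hx))]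
  have hright : ∀ t, ∫⁻ x in Ioi a, K x t ∂μ = (∫⁻ x in Ioo a t, g x ∂μ) * f t := by
    intro t
    have hK_t : ∀ x, K x t = (Iio t).indicator g x * f t := by
      intro x
      by_cases h : x < t <;> simp [K, indicator_apply, h]
    simp_rw [hK_t]
    rw [lintegral_mul_const _ (hg.indicator measurableSet_Iio),
      lintegral_indicator measurableSet_Iio, Measure.restrict_restrict measurableSet_Iio,
      Iio_inter_Ioi]
  rw [setLIntegral_congr_fun measurableSet_Ioi hleft, lintegral_lintegral_swap hK]
  simp_rw [hright]

lemma eLpNorm_two_le_mul_of_lintegral_sq_le {α E F : Type*} [MeasurableSpace α] {μ : Measure α}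
    [NormedAddCommGroup E] [NormedAddCommGroup F] {f : α → E} {g : α → F} {c : ℝ≥0∞}
    (h : ∫⁻ x, ‖f x‖ₑ ^ 2 ∂μ ≤ c ^ 2 * ∫⁻ x, ‖g x‖ₑ ^ 2 ∂μ) :
    eLpNorm f 2 μ ≤ c * eLpNorm g 2 μ := by
  have hf := eLpNorm_nnreal_pow_eq_lintegral (f := f) (μ := μ) (p := 2) two_ne_zero
  have hg := eLpNorm_nnreal_pow_eq_lintegral (f := g) (μ := μ) (p := 2) two_ne_zero
  norm_num at hf hg
  rw [← ENNReal.pow_le_pow_left_iff two_ne_zero, mul_pow, hf, hg]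
  exact h

lemma map_neg_restrict {s : Set ℝ} (hs : MeasurableSet s) :
    (volume.restrict (-s)).map Neg.neg = volume.restrict s := by
  rw [← neg_preimage, ← Measure.restrict_map measurable_neg hs, Measure.map_neg_eq_self]

section

variable {E : Type*} [NormedAddCommGroup E] [NormedSpace ℝ E]

lemma enorm_cosh_smul_integral_Ioi_sq_le {w : ℝ → E} {x : ℝ} (hx : 0 ≤ x)
    (hw : AEStronglyMeasurable w (volume.restrict (Ioi x))) :
    ‖cosh x • ∫ t in Ioi x, (cosh t)⁻¹ • w t‖ₑ ^ 2 ≤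
      2 * ENNReal.ofReal (exp x) * ∫⁻ t in Ioi x, ENNReal.ofReal (cosh t)⁻¹ * ‖w t‖ₑ ^ 2 := by
  have hsech : Measurable fun t => ENNReal.ofReal (cosh t)⁻¹ := by fun_prop
  calc ‖cosh x • ∫ t in Ioi x, (cosh t)⁻¹ • w t‖ₑ ^ 2
      ≤ (ENNReal.ofReal (cosh x) * ∫⁻ t in Ioi x, ENNReal.ofReal (cosh t)⁻¹ * ‖w t‖ₑ) ^ 2 := by
        rw [enorm_smul, Real.enorm_eq_ofReal (cosh_pos x).le]
        gcongr
        refine (enorm_integral_le_lintegral_enorm _).trans_eq (lintegral_congr fun t => ?_)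
        rw [enorm_smul, Real.enorm_eq_ofReal (inv_pos.mpr (cosh_pos t)).le]
    _ ≤ ENNReal.ofReal (cosh x) ^ 2 * ((∫⁻ t in Ioi x, ENNReal.ofReal (cosh t)⁻¹) *
          ∫⁻ t in Ioi x, ENNReal.ofReal (cosh t)⁻¹ * ‖w t‖ₑ ^ 2) := by
        rw [mul_pow]
        gcongr
        exact lintegral_mul_sq_le hsech.aemeasurable hw.enorm
    _ ≤ ENNReal.ofReal (cosh x) ^ 2 * (2 * ENNReal.ofReal (exp (-x)) *
          ∫⁻ t in Ioi x, ENNReal.ofReal (cosh t)⁻¹ * ‖w t‖ₑ ^ 2) := by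
        gcongr
        exact lintegral_inv_cosh_Ioi_le x
    _ ≤ 2 * ENNReal.ofReal (exp x) * ∫⁻ t in Ioi x, ENNReal.ofReal (cosh t)⁻¹ * ‖w t‖ₑ ^ 2 := by
        rw [← mul_assoc, mul_left_comm]
        gcongr
        rw [← ENNReal.ofReal_pow (cosh_pos x).le, ← ENNReal.ofReal_mul (by positivity)]
        exact ENNReal.ofReal_le_ofReal (cosh_sq_mul_exp_neg_le hx)

lemma lintegral_enorm_cosh_smul_integral_Ioi_sq_le {w : ℝ → E}
    (hw : AEStronglyMeasurable w (volume.restrict (Ioi 0))) :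
    ∫⁻ x in Ioi 0, ‖cosh x • ∫ t in Ioi x, (cosh t)⁻¹ • w t‖ₑ ^ 2 ≤
      2 ^ 2 * ∫⁻ t in Ioi 0, ‖w t‖ₑ ^ 2 := by
  set f : ℝ → ℝ≥0∞ := fun t => ENNReal.ofReal (cosh t)⁻¹ * ‖w t‖ₑ ^ 2
  have hf : AEMeasurable f (volume.restrict (Ioi 0)) :=
    (Measurable.aemeasurable (by fun_prop)).mul (hw.enorm.pow_const 2)
  calc ∫⁻ x in Ioi 0, ‖cosh x • ∫ t in Ioi x, (cosh t)⁻¹ • w t‖ₑ ^ 2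
      ≤ ∫⁻ x in Ioi 0, 2 * ENNReal.ofReal (exp x) * ∫⁻ t in Ioi x, f t :=
        setLIntegral_mono' measurableSet_Ioi fun x hx => enorm_cosh_smul_integral_Ioi_sq_le
          (le_of_lt hx) (hw.mono_measure (Measure.restrict_mono (Ioi_subset_Ioi hx.le) le_rfl))
    _ = ∫⁻ t in Ioi 0, (∫⁻ x in Ioo 0 t, 2 * ENNReal.ofReal (exp x)) * f t :=
        lintegral_Ioi_mul_lintegral_Ioi 0 (by fun_prop) hf
    _ ≤ ∫⁻ t in Ioi 0, 2 ^ 2 * ‖w t‖ₑ ^ 2 := by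
        refine lintegral_mono fun t => ?_
        rw [lintegral_const_mul _ (by fun_prop), pow_two (2 : ℝ≥0∞), mul_assoc, mul_assoc,
          ← mul_assoc _ (ENNReal.ofReal _)]
        gcongr
        exact lintegral_Ioo_exp_mul_inv_cosh_le 0 t
    _ = 2 ^ 2 * ∫⁻ t in Ioi 0, ‖w t‖ₑ ^ 2 := lintegral_const_mul' _ _ (by norm_num)

lemma eLpNorm_cosh_smul_integral_Ioi_le {w : ℝ → E}
    (hw : AEStronglyMeasurable w (volume.restrict (Ioi 0))) :
    eLpNorm (fun x => cosh x • ∫ t in Ioi x, (cosh t)⁻¹ • w t) 2 (volume.restrict (Ioi 0)) ≤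
      2 * eLpNorm w 2 (volume.restrict (Ioi 0)) :=
  eLpNorm_two_le_mul_of_lintegral_sq_le (lintegral_enorm_cosh_smul_integral_Ioi_sq_le hw)

lemma memLp_cosh_smul_integral_Ioi {w : ℝ → E} (hw : MemLp w 2 (volume.restrict (Ioi 0))) :
    MemLp (fun x => cosh x • ∫ t in Ioi x, (cosh t)⁻¹ • w t) 2 (volume.restrict (Ioi 0)) := by
  have hint : IntegrableOn (fun t => (cosh t)⁻¹ • w t) (Ioi 0) := by
    rw [IntegrableOn, ← memLp_one_iff_integrable]
    exact hw.smul (memLp_two_inv_cosh_Ioi 0)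
  have hcont : ContinuousOn (fun x => cosh x • ∫ t in Ioi x, (cosh t)⁻¹ • w t) (Ioi 0) :=
    continuous_cosh.continuousOn.smul
      (hint.continuousOn_Ici_primitive_Ioi.mono Ioi_subset_Ici_self)
  exact ⟨hcont.aestronglyMeasurable measurableSet_Ioi,
    (eLpNorm_cosh_smul_integral_Ioi_le hw.1).trans_lt (ENNReal.mul_lt_top (by norm_num) hw.2)⟩

lemma cosh_smul_integral_Iio_eq_comp_neg (w : ℝ → E) :
    (fun x => cosh x • ∫ t in Iio x, (cosh t)⁻¹ • w t) =
      (fun y => cosh y • ∫ t in Ioi y, (cosh t)⁻¹ • w (-t)) ∘ Neg.neg := by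
  ext x
  simp only [Function.comp_apply, cosh_neg]
  have hrefl := integral_comp_neg_Ioi (-x) fun t => (cosh t)⁻¹ • w t
  simp only [cosh_neg, neg_neg] at hrefl
  rw [hrefl, integral_Iic_eq_integral_Iio]

lemma eLpNorm_cosh_smul_integral_Iio_le {w : ℝ → E}
    (hw : AEStronglyMeasurable w (volume.restrict (Iio 0))) :
    eLpNorm (fun x => cosh x • ∫ t in Iio x, (cosh t)⁻¹ • w t) 2 (volume.restrict (Iio 0)) ≤
      2 * eLpNorm w 2 (volume.restrict (Iio 0)) := by
  have hIio : volume.restrict (Iio (0 : ℝ)) = (volume.restrict (Ioi 0)).map Neg.neg := by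
    simpa using (map_neg_restrict (measurableSet_Iio (a := (0 : ℝ)))).symm
  have hIoi : volume.restrict (Ioi (0 : ℝ)) = (volume.restrict (Iio 0)).map Neg.neg := by
    simpa using (map_neg_restrict (measurableSet_Ioi (a := (0 : ℝ)))).symm
  have hw' : AEStronglyMeasurable (w ∘ Neg.neg) (volume.restrict (Ioi 0)) := by
    rw [hIio] at hw
    exact hw.comp_aemeasurable measurable_neg.aemeasurable
  rw [cosh_smul_integral_Iio_eq_comp_neg, ← measurableEmbedding_neg.eLpNorm_map_measure, ← hIoi,
    hIio, measurableEmbedding_neg.eLpNorm_map_measure]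
  exact eLpNorm_cosh_smul_integral_Ioi_le hw'

lemma memLp_cosh_smul_integral_Iio {w : ℝ → E} (hw : MemLp w 2 (volume.restrict (Iio 0))) :
    MemLp (fun x => cosh x • ∫ t in Iio x, (cosh t)⁻¹ • w t) 2 (volume.restrict (Iio 0)) := by
  have hIio : volume.restrict (Iio (0 : ℝ)) = (volume.restrict (Ioi 0)).map Neg.neg := by
    simpa using (map_neg_restrict (measurableSet_Iio (a := (0 : ℝ)))).symm
  have hIoi : volume.restrict (Ioi (0 : ℝ)) = (volume.restrict (Iio 0)).map Neg.neg := by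
    simpa using (map_neg_restrict (measurableSet_Ioi (a := (0 : ℝ)))).symm
  rw [hIio] at hw
  rw [cosh_smul_integral_Iio_eq_comp_neg, ← measurableEmbedding_neg.memLp_map_measure_iff, ← hIoi]
  exact memLp_cosh_smul_integral_Ioi (measurableEmbedding_neg.memLp_map_measure_iff.1 hw)

end

/-- For every `w ∈ L²(0,∞)`, the function `x ↦ cosh x * ∫ₓ^∞ sech t · w t dt` belongs to
`L²(0,∞)` with norm at most `2‖w‖`; likewise on `(-∞,0)` with the integral `∫_{-∞}^x`. -/
theorem stmt_0 :
    (∀ w : ℝ → ℂ, MemLp w 2 (volume.restrict (Set.Ioi (0:ℝ))) →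
      MemLp (fun x : ℝ => Real.cosh x • ∫ t in Set.Ioi x, (Real.cosh t)⁻¹ • w t) 2
        (volume.restrict (Set.Ioi (0:ℝ))) ∧
      eLpNorm (fun x : ℝ => Real.cosh x • ∫ t in Set.Ioi x, (Real.cosh t)⁻¹ • w t) 2
        (volume.restrict (Set.Ioi (0:ℝ)))
        ≤ 2 * eLpNorm w 2 (volume.restrict (Set.Ioi (0:ℝ)))) ∧
    (∀ w : ℝ → ℂ, MemLp w 2 (volume.restrict (Set.Iio (0:ℝ))) →
      MemLp (fun x : ℝ => Real.cosh x • ∫ t in Set.Iio x, (Real.cosh t)⁻¹ • w t) 2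
        (volume.restrict (Set.Iio (0:ℝ))) ∧
      eLpNorm (fun x : ℝ => Real.cosh x • ∫ t in Set.Iio x, (Real.cosh t)⁻¹ • w t) 2
        (volume.restrict (Set.Iio (0:ℝ)))
        ≤ 2 * eLpNorm w 2 (volume.restrict (Set.Iio (0:ℝ)))) :=
  ⟨fun _ hw => ⟨memLp_cosh_smul_integral_Ioi hw, eLpNorm_cosh_smul_integral_Ioi_le hw.1⟩,
    fun _ hw => ⟨memLp_cosh_smul_integral_Iio hw, eLpNorm_cosh_smul_integral_Iio_le hw.1⟩⟩
end

section
/- For every w ∈ L²(ℝ), the function x ↦ sech(x)·∫₀^x cosh(t)·w(t) dt belongs to L²(ℝ) and its L²(ℝ)-norm is at most 2‖w‖_{L²(ℝ)}. -/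
open MeasureTheory Real Filter
open scoped ENNReal Interval
open Set Function ProbabilityTheory

/-!
Write `F x = (cosh x)⁻¹ • ∫₀ˣ cosh t • w t` as an integral operator with kernel
`K x t = 1_{t ∈ Ι 0 x} cosh t / cosh x`. On the support of `K` the points `0, t, x` are ordered
monotonically, so `cosh t / cosh x ≤ 2 e^{-|x - t|}` and, in each variable, `K` is bounded by a
translate of twice the density `exponentialPDF 1` of the one-sided exponential distribution
(on which side depends on the signs of `x` and `t`). Hence both marginals `∫ K x t dt` and
`∫ K x t dx` are at most `2`, and Schur's test gives `‖F‖₂ ≤ 2 ‖w‖₂`.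
-/

section Schur

variable {α β : Type*} [MeasurableSpace α] [MeasurableSpace β] {μ : Measure α} {ν : Measure β}

theorem sq_lintegral_mul_le_lintegral_mul_lintegral_mul_sq {k g : β → ℝ≥0∞}
    (hk : AEMeasurable k ν) (hg : AEMeasurable g ν) :
    (∫⁻ t, k t * g t ∂ν) ^ 2 ≤ (∫⁻ t, k t ∂ν) * ∫⁻ t, k t * g t ^ 2 ∂ν := by
  have sq_sqrt : ∀ y : ℝ≥0∞, (y ^ (1 / 2 : ℝ)) ^ (2 : ℝ) = y := fun y => by
    rw [← ENNReal.rpow_mul]; norm_num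
  -- Hölder with `p = q = 2` for `√k` and `√k * g`
  have holder := ENNReal.lintegral_mul_le_Lp_mul_Lq ν Real.HolderConjugate.two_two
    (hk.pow_const (1 / 2 : ℝ)) ((hk.pow_const (1 / 2 : ℝ)).mul hg)
  simp only [Pi.mul_apply, ← mul_assoc, ENNReal.mul_rpow_of_nonneg _ _ zero_le_two, sq_sqrt,
    ← ENNReal.rpow_add_of_nonneg _ _ one_half_pos.le one_half_pos.le, add_halves,
    ENNReal.rpow_one, ENNReal.rpow_two] at holder
  calc (∫⁻ t, k t * g t ∂ν) ^ 2
      ≤ ((∫⁻ t, k t ∂ν) ^ (1 / 2 : ℝ) * (∫⁻ t, k t * g t ^ 2 ∂ν) ^ (1 / 2 : ℝ)) ^ 2 :=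
        pow_le_pow_left' holder 2
    _ = (∫⁻ t, k t ∂ν) * ∫⁻ t, k t * g t ^ 2 ∂ν := by
        rw [mul_pow, ← ENNReal.rpow_two, ← ENNReal.rpow_two, sq_sqrt, sq_sqrt]

theorem lintegral_sq_lintegral_mul_le_of_schur [SFinite μ] [SFinite ν] {K : α → β → ℝ≥0∞}
    (hK : Measurable (uncurry K)) {g : β → ℝ≥0∞} (hg : AEMeasurable g ν) {A B : ℝ≥0∞}
    (hA : ∀ᵐ x ∂μ, ∫⁻ t, K x t ∂ν ≤ A) (hB : ∀ᵐ t ∂ν, ∫⁻ x, K x t ∂μ ≤ B) :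
    ∫⁻ x, (∫⁻ t, K x t * g t ∂ν) ^ 2 ∂μ ≤ A * B * ∫⁻ t, g t ^ 2 ∂ν := by
  have hKg : AEMeasurable (uncurry fun x t => K x t * g t ^ 2) (μ.prod ν) :=
    hK.aemeasurable.mul (hg.pow_const 2).comp_snd
  calc ∫⁻ x, (∫⁻ t, K x t * g t ∂ν) ^ 2 ∂μ
      ≤ ∫⁻ x, A * ∫⁻ t, K x t * g t ^ 2 ∂ν ∂μ := by
        refine lintegral_mono_ae (hA.mono fun x hx => ?_)
        exact (sq_lintegral_mul_le_lintegral_mul_lintegral_mul_sq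
          hK.of_uncurry_left.aemeasurable hg).trans (mul_le_mul_left hx _)
    _ = A * ∫⁻ t, ∫⁻ x, K x t * g t ^ 2 ∂μ ∂ν := by
        rw [lintegral_const_mul'' _ hKg.lintegral_prod_right, lintegral_lintegral_swap hKg]
    _ = A * ∫⁻ t, (∫⁻ x, K x t ∂μ) * g t ^ 2 ∂ν := by
        simp only [lintegral_mul_const _ hK.of_uncurry_right]
    _ ≤ A * ∫⁻ t, B * g t ^ 2 ∂ν :=
        mul_le_mul_right (lintegral_mono_ae (hB.mono fun t ht => mul_le_mul_left ht _)) A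
    _ = A * B * ∫⁻ t, g t ^ 2 ∂ν := by
        rw [lintegral_const_mul'' _ (hg.pow_const 2), mul_assoc]

end Schur

theorem eLpNorm_two_sq {α E : Type*} [MeasurableSpace α] [ENorm E] (f : α → E) (μ : Measure α) :
    eLpNorm f 2 μ ^ 2 = ∫⁻ x, ‖f x‖ₑ ^ 2 ∂μ := by
  simpa using eLpNorm_nnreal_pow_eq_lintegral (f := f) (μ := μ) (p := 2) two_ne_zero

theorem cosh_le_two_mul_exp_sub_mul_cosh {t : ℝ} (ht : 0 ≤ t) (x : ℝ) :
    cosh t ≤ 2 * exp (t - x) * cosh x :=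
  calc cosh t ≤ exp t := by rw [cosh_eq]; linarith [exp_le_exp.2 (neg_le_self ht)]
    _ = exp (t - x) * exp x := by rw [← exp_add, sub_add_cancel]
    _ ≤ exp (t - x) * (2 * cosh x) := by gcongr; rw [cosh_eq]; linarith [exp_pos (-x)]
    _ = 2 * exp (t - x) * cosh x := by ring

theorem ofReal_cosh_div_cosh_le_exponentialPDF {t x : ℝ} (ht : 0 ≤ t) (htx : t ≤ x) :
    ENNReal.ofReal (cosh t / cosh x) ≤ 2 * exponentialPDF 1 (x - t) := by
  rw [exponentialPDF_of_nonneg (sub_nonneg.2 htx), ← ENNReal.ofReal_ofNat 2,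
    ← ENNReal.ofReal_mul zero_le_two]
  refine ENNReal.ofReal_le_ofReal ((div_le_iff₀ (cosh_pos x)).2 ?_)
  simpa only [one_mul, neg_sub] using cosh_le_two_mul_exp_sub_mul_cosh ht x

noncomputable def coshKernel (x t : ℝ) : ℝ≥0∞ :=
  (Ι 0 x).indicator (fun t => ENNReal.ofReal (cosh t / cosh x)) t

theorem measurable_coshKernel : Measurable (uncurry coshKernel) := by
  have hS : MeasurableSet {p : ℝ × ℝ | p.2 ∈ Ι 0 p.1} :=
    (measurableSet_lt (measurable_const.min measurable_fst) measurable_snd).inter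
      (measurableSet_le measurable_snd (measurable_const.max measurable_fst))
  exact (Measurable.ennreal_ofReal (by fun_prop)).indicator hS

theorem coshKernel_le_of_pos {x t : ℝ} (h : 0 < x ∨ 0 < t) :
    coshKernel x t ≤ 2 * exponentialPDF 1 (x - t) := by
  by_cases hm : t ∈ Ι 0 x
  · rw [coshKernel, indicator_of_mem hm]
    rcases mem_uIoc.1 hm with ⟨h0t, htx⟩ | ⟨hxt, ht0⟩
    · exact ofReal_cosh_div_cosh_le_exponentialPDF h0t.le htx
    · rcases h with h | h <;> linarith
  · rw [coshKernel, indicator_of_notMem hm]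
    exact zero_le

theorem coshKernel_le_of_nonpos {x t : ℝ} (h : x ≤ 0 ∨ t ≤ 0) :
    coshKernel x t ≤ 2 * exponentialPDF 1 (t - x) := by
  by_cases hm : t ∈ Ι 0 x
  · rw [coshKernel, indicator_of_mem hm]
    rcases mem_uIoc.1 hm with ⟨h0t, htx⟩ | ⟨hxt, ht0⟩
    · rcases h with h | h <;> linarith
    · simpa only [cosh_neg, neg_sub_neg] using
        ofReal_cosh_div_cosh_le_exponentialPDF (neg_nonneg.2 ht0) (neg_le_neg hxt.le)
  · rw [coshKernel, indicator_of_notMem hm]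
    exact zero_le

theorem lintegral_two_mul_exponentialPDF_sub_left (c : ℝ) :
    ∫⁻ t, 2 * exponentialPDF 1 (c - t) = 2 := by
  rw [lintegral_const_mul' _ _ ENNReal.ofNat_ne_top,
    lintegral_sub_left_eq_self (fun t => exponentialPDF 1 t),
    lintegral_exponentialPDF_eq_one one_pos, mul_one]

theorem lintegral_two_mul_exponentialPDF_sub_right (c : ℝ) :
    ∫⁻ t, 2 * exponentialPDF 1 (t - c) = 2 := by
  rw [lintegral_const_mul' _ _ ENNReal.ofNat_ne_top,
    lintegral_sub_right_eq_self (fun t => exponentialPDF 1 t),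
    lintegral_exponentialPDF_eq_one one_pos, mul_one]

theorem lintegral_coshKernel_le (x : ℝ) : ∫⁻ t, coshKernel x t ≤ 2 := by
  rcases lt_or_ge 0 x with hx | hx
  · exact (lintegral_mono fun t => coshKernel_le_of_pos (.inl hx)).trans_eq
      (lintegral_two_mul_exponentialPDF_sub_left x)
  · exact (lintegral_mono fun t => coshKernel_le_of_nonpos (.inl hx)).trans_eq
      (lintegral_two_mul_exponentialPDF_sub_right x)

theorem lintegral_coshKernel_left_le (t : ℝ) : ∫⁻ x, coshKernel x t ≤ 2 := by
  rcases lt_or_ge 0 t with ht | ht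
  · exact (lintegral_mono fun x => coshKernel_le_of_pos (.inr ht)).trans_eq
      (lintegral_two_mul_exponentialPDF_sub_right t)
  · exact (lintegral_mono fun x => coshKernel_le_of_nonpos (.inr ht)).trans_eq
      (lintegral_two_mul_exponentialPDF_sub_left t)

section Operator

variable {E : Type*} [NormedAddCommGroup E] [NormedSpace ℝ E]

theorem enorm_sech_smul_integral_le (w : ℝ → E) (x : ℝ) :
    ‖(cosh x)⁻¹ • ∫ t in 0..x, cosh t • w t‖ₑ ≤ ∫⁻ t, coshKernel x t * ‖w t‖ₑ := by
  have hsech : ‖(cosh x)⁻¹‖ₑ = ENNReal.ofReal (cosh x)⁻¹ :=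
    Real.enorm_of_nonneg (inv_nonneg.2 (cosh_pos x).le)
  calc ‖(cosh x)⁻¹ • ∫ t in 0..x, cosh t • w t‖ₑ
      = ‖(cosh x)⁻¹‖ₑ * ‖∫ t in Ι 0 x, cosh t • w t‖ₑ := by
        rw [enorm_smul]
        exact congrArg _
          (enorm_eq_iff_norm_eq.2 (intervalIntegral.norm_integral_eq_norm_integral_uIoc _))
    _ ≤ ‖(cosh x)⁻¹‖ₑ * ∫⁻ t in Ι 0 x, ‖cosh t • w t‖ₑ := by
        gcongr; exact enorm_integral_le_lintegral_enorm _
    _ = ∫⁻ t in Ι 0 x, ENNReal.ofReal (cosh t / cosh x) * ‖w t‖ₑ := by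
        rw [← lintegral_const_mul' _ _ enorm_ne_top]
        congr 1 with t
        rw [enorm_smul, Real.enorm_of_nonneg (cosh_pos t).le, hsech, ← mul_assoc,
          ← ENNReal.ofReal_mul (inv_nonneg.2 (cosh_pos x).le), inv_mul_eq_div]
    _ = ∫⁻ t, coshKernel x t * ‖w t‖ₑ := by
        rw [← lintegral_indicator measurableSet_uIoc]
        simp only [coshKernel, indicator_mul_left]

theorem continuous_sech_smul_primitive {w : ℝ → E} (hw : LocallyIntegrable w) :
    Continuous fun x => (cosh x)⁻¹ • ∫ t in 0..x, cosh t • w t := by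
  have hcw : LocallyIntegrable (fun t => cosh t • w t) := hw.continuous_smul continuous_cosh
  exact (continuous_cosh.inv₀ fun x => (cosh_pos x).ne').smul
    (intervalIntegral.continuous_primitive
      (fun a b => (hcw.integrableOn_isCompact isCompact_uIcc).intervalIntegrable) 0)

end Operator

/-- For every `w ∈ L²(ℝ)`, the function `x ↦ sech x * ∫₀^x cosh t · w t dt` belongs to
`L²(ℝ)` with norm at most `2‖w‖`. -/
theorem stmt_1 (w : ℝ → ℂ) (hw : MemLp w 2 (volume : Measure ℝ)) :
    MemLp (fun x : ℝ => (Real.cosh x)⁻¹ • ∫ t in (0:ℝ)..x, Real.cosh t • w t) 2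
      (volume : Measure ℝ) ∧
    eLpNorm (fun x : ℝ => (Real.cosh x)⁻¹ • ∫ t in (0:ℝ)..x, Real.cosh t • w t) 2
      (volume : Measure ℝ) ≤ 2 * eLpNorm w 2 (volume : Measure ℝ) := by
  set F := fun x : ℝ => (cosh x)⁻¹ • ∫ t in (0:ℝ)..x, cosh t • w t
  have hsq : eLpNorm F 2 volume ^ 2 ≤ (2 * eLpNorm w 2 volume) ^ 2 :=
    calc eLpNorm F 2 volume ^ 2 = ∫⁻ x, ‖F x‖ₑ ^ 2 := eLpNorm_two_sq F volume
      _ ≤ ∫⁻ x, (∫⁻ t, coshKernel x t * ‖w t‖ₑ) ^ 2 :=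
        lintegral_mono fun x => pow_le_pow_left' (enorm_sech_smul_integral_le w x) 2
      _ ≤ 2 * 2 * ∫⁻ t, ‖w t‖ₑ ^ 2 :=
        lintegral_sq_lintegral_mul_le_of_schur measurable_coshKernel hw.1.enorm
          (ae_of_all _ lintegral_coshKernel_le) (ae_of_all _ lintegral_coshKernel_left_le)
      _ = (2 * eLpNorm w 2 volume) ^ 2 := by rw [mul_pow, eLpNorm_two_sq]; norm_num
  have hle : eLpNorm F 2 volume ≤ 2 * eLpNorm w 2 volume :=
    (ENNReal.pow_le_pow_left_iff two_ne_zero).1 hsq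
  exact ⟨⟨(continuous_sech_smul_primitive (hw.locallyIntegrable one_le_two)).aestronglyMeasurable,
    hle.trans_lt (ENNReal.mul_lt_top ENNReal.ofNat_lt_top hw.2)⟩, hle⟩
end

section
/- Let (uₙ) be a sequence of twice weakly differentiable functions uₙ: ℝ → ℂ such that the quantities ‖cosh(·)uₙ''‖_{L²(ℝ)}, ‖uₙ'‖_{L²(ℝ)}, and ‖sech(·)uₙ‖_{L²(ℝ)} are uniformly bounded in n. Then there exists a subsequence (u_{n_k}) such that (sech(·)·u_{n_k}) converges in L²(ℝ). -/
/-!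
Cauchy–Schwarz against `sech ∈ L²` turns the bound on `cosh · uₙ''` into a uniform bound on
`‖uₙ''‖_{L¹}`, so `u'ₙ` oscillates by a bounded amount; being bounded in `L²`, `u'ₙ` is small
somewhere in `[0, 1]`, hence uniformly bounded, and the `uₙ` are uniformly Lipschitz. The same
anchoring for `sech · uₙ` gives `|uₙ x| ≤ a (1 + |x|)`. Arzelà–Ascoli in `C(ℝ, ℂ)` yields a
pointwise convergent subsequence, and since `(1 + |x|) sech x ∈ L²`, dominated convergence gives
convergence of `sech · u_{n_k}` in `L²`.
-/

open MeasureTheory Real Filter Set Topology Metric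
open scoped ENNReal NNReal

lemma integrable_exp_neg_mul_abs {b : ℝ} (hb : 0 < b) :
    Integrable fun x : ℝ => exp (-(b * |x|)) := by
  rw [← integrableOn_univ, ← Iic_union_Ioi (a := (0 : ℝ))]
  refine IntegrableOn.union ?_ ?_
  · refine (integrableOn_exp_mul_Iic hb 0).congr_fun (fun x hx => ?_) measurableSet_Iic
    rw [abs_of_nonpos hx, mul_neg, neg_neg]
  · refine (integrableOn_exp_mul_Ioi (neg_neg_of_pos hb) 0).congr_fun (fun x hx => ?_)
      measurableSet_Ioi
    simp only [abs_of_pos (mem_Ioi.mp hx), neg_mul]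

lemma memLp_two_exp_neg_mul_abs {b : ℝ} (hb : 0 < b) :
    MemLp (fun x : ℝ => exp (-(b * |x|))) 2 := by
  refine (memLp_two_iff_integrable_sq (by fun_prop)).2 ?_
  refine (integrable_exp_neg_mul_abs (mul_pos two_pos hb)).congr (ae_of_all _ fun x => ?_)
  simp only [← exp_nat_mul]; ring_nf

lemma inv_cosh_le_two_mul_exp_neg_abs (x : ℝ) : (cosh x)⁻¹ ≤ 2 * exp (-|x|) :=
  calc (cosh x)⁻¹ = 2 / (exp |x| + exp (-|x|)) := by rw [← cosh_abs, cosh_eq, inv_div]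
    _ ≤ 2 / exp |x| :=
        div_le_div_of_nonneg_left zero_le_two (exp_pos _) (le_add_of_nonneg_right (exp_pos _).le)
    _ = 2 * exp (-|x|) := by rw [exp_neg, div_eq_mul_inv]

lemma one_add_abs_mul_inv_cosh_le (x : ℝ) : (1 + |x|) * (cosh x)⁻¹ ≤ 4 * exp (-(2⁻¹ * |x|)) := by
  have h1 : 1 + |x| ≤ 2 * exp (2⁻¹ * |x|) := by
    linarith [add_one_le_exp (2⁻¹ * |x|), abs_nonneg x]
  calc (1 + |x|) * (cosh x)⁻¹ ≤ 2 * exp (2⁻¹ * |x|) * (2 * exp (-|x|)) :=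
        mul_le_mul h1 (inv_cosh_le_two_mul_exp_neg_abs x) (by positivity) (by positivity)
    _ = 4 * exp (-(2⁻¹ * |x|)) := by
        rw [mul_mul_mul_comm, ← exp_add]; ring_nf

lemma memLp_two_one_add_abs_mul_inv_cosh :
    MemLp (fun x : ℝ => (1 + |x|) * (cosh x)⁻¹) 2 :=
  ((memLp_two_exp_neg_mul_abs (by norm_num : (0:ℝ) < 2⁻¹)).const_mul 4).of_le (by fun_prop)
    (ae_of_all _ fun x => by
      rw [norm_of_nonneg (by positivity), norm_of_nonneg (by positivity)]
      exact one_add_abs_mul_inv_cosh_le x)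

lemma memLp_two_inv_cosh : MemLp (fun x : ℝ => (cosh x)⁻¹) 2 :=
  memLp_two_one_add_abs_mul_inv_cosh.of_le (by fun_prop) (ae_of_all _ fun x => by
    rw [norm_of_nonneg (by positivity), norm_of_nonneg (by positivity)]
    exact le_mul_of_one_le_left (by positivity) (le_add_of_nonneg_right (abs_nonneg x)))

lemma exists_mem_Icc_enorm_le_of_eLpNorm_le {E : Type*} [NormedAddCommGroup E] {f : ℝ → E}
    {p B : ℝ≥0∞} (hp0 : p ≠ 0) (hp : p ≠ ∞) (hf : AEStronglyMeasurable f)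
    (hB : eLpNorm f p volume ≤ B) : ∃ y ∈ Icc (0 : ℝ) 1, ‖f y‖ₑ ≤ B := by
  have hr : 0 < p.toReal := ENNReal.toReal_pos hp0 hp
  have : IsProbabilityMeasure (volume.restrict (Icc (0 : ℝ) 1)) := ⟨by simp⟩
  obtain ⟨y, hy, hyle⟩ := exists_notMem_null_le_laverage (μ := volume.restrict (Icc (0 : ℝ) 1))
    (N := (Icc (0 : ℝ) 1)ᶜ) (f := fun x => ‖f x‖ₑ ^ p.toReal) (IsProbabilityMeasure.ne_zero _)
    (hf.enorm.restrict.pow_const _) (by simp)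
  refine ⟨y, not_not.mp hy, (ENNReal.rpow_le_rpow_iff hr).mp ?_⟩
  calc ‖f y‖ₑ ^ p.toReal ≤ ∫⁻ x in Icc 0 1, ‖f x‖ₑ ^ p.toReal := by
        rwa [laverage_eq_lintegral] at hyle
    _ ≤ ∫⁻ x, ‖f x‖ₑ ^ p.toReal := setLIntegral_le_lintegral _ _
    _ = eLpNorm f p volume ^ p.toReal := by
        rw [eLpNorm_eq_lintegral_rpow_enorm_toReal hp0 hp, ← ENNReal.rpow_mul,
          one_div_mul_cancel hr.ne', ENNReal.rpow_one]
    _ ≤ B ^ p.toReal := by gcongr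

lemma enorm_sub_le_eLpNorm_one_of_hasDerivAt {E : Type*} [NormedAddCommGroup E]
    [NormedSpace ℝ E] [CompleteSpace E] {f f' : ℝ → E} (hf : ∀ x, HasDerivAt f (f' x) x)
    (hf' : Integrable f') (x y : ℝ) : ‖f x - f y‖ₑ ≤ eLpNorm f' 1 volume := by
  rw [← intervalIntegral.integral_eq_sub_of_hasDerivAt (fun t _ => hf t)
    hf'.intervalIntegrable, eLpNorm_one_eq_lintegral_enorm]
  calc ‖∫ t in y..x, f' t‖ₑ = ‖∫ t in uIoc y x, f' t‖ₑ := by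
        rw [← enorm_norm, intervalIntegral.norm_integral_eq_norm_integral_uIoc, enorm_norm]
    _ ≤ ∫⁻ t in uIoc y x, ‖f' t‖ₑ := enorm_integral_le_lintegral_enorm _
    _ ≤ ∫⁻ t, ‖f' t‖ₑ := setLIntegral_le_lintegral _ _

lemma eLpNorm_one_le_eLpNorm_inv_cosh_mul {E : Type*} [NormedAddCommGroup E]
    [NormedSpace ℝ E] {f : ℝ → E} (hf : AEStronglyMeasurable f) :
    eLpNorm f 1 volume ≤
      eLpNorm (fun x => (cosh x)⁻¹) 2 volume * eLpNorm (fun x => cosh x • f x) 2 volume := by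
  have h := eLpNorm_smul_le_mul_eLpNorm (p := 2) (q := 2) (r := 1) (μ := volume)
    (continuous_cosh.aestronglyMeasurable.smul hf) (φ := fun x => (cosh x)⁻¹) (by fun_prop)
  refine le_of_eq_of_le (congrArg (eLpNorm · 1 volume) (funext fun x => ?_)) h
  simp [smul_smul, inv_mul_cancel₀ (cosh_pos x).ne']

theorem tendsto_eLpNorm_sub_of_dominated {α E : Type*} [MeasurableSpace α] {μ : Measure α}
    [NormedAddCommGroup E] {p : ℝ≥0∞} (hp0 : p ≠ 0) (hp : p ≠ ∞) {F : ℕ → α → E} {f : α → E}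
    {bound : α → ℝ} (hF : ∀ n, AEStronglyMeasurable (F n) μ) (hbound : MemLp bound p μ)
    (h_le : ∀ n, ∀ᵐ x ∂μ, ‖F n x‖ ≤ bound x)
    (h_lim : ∀ᵐ x ∂μ, Tendsto (fun n => F n x) atTop (𝓝 (f x))) :
    Tendsto (fun n => eLpNorm (fun x => F n x - f x) p μ) atTop (𝓝 0) := by
  have hr : 0 < p.toReal := ENNReal.toReal_pos hp0 hp
  have hf : AEStronglyMeasurable f μ := aestronglyMeasurable_of_tendsto_ae _ hF h_lim
  have h_le_sub : ∀ n, ∀ᵐ x ∂μ, ‖F n x - f x‖ₑ ^ p.toReal ≤ ‖2 * bound x‖ₑ ^ p.toReal := by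
    intro n
    filter_upwards [h_le n, h_lim, ae_all_iff.2 h_le] with x hFx hx hall
    have hfx : ‖f x‖ ≤ bound x := le_of_tendsto hx.norm (Eventually.of_forall hall)
    gcongr
    rw [← ofReal_norm, ← ofReal_norm]
    refine ENNReal.ofReal_le_ofReal ((norm_sub_le _ _).trans ?_)
    rw [norm_mul, Real.norm_two, Real.norm_eq_abs]
    linarith [le_abs_self (bound x)]
  have h_fin : ∫⁻ x, ‖2 * bound x‖ₑ ^ p.toReal ∂μ ≠ ∞ :=
    (lintegral_rpow_enorm_lt_top_of_eLpNorm_lt_top hp0 hp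
      (hbound.const_mul 2).eLpNorm_lt_top).ne
  have h_lim' : ∀ᵐ x ∂μ, Tendsto (fun n => ‖F n x - f x‖ₑ ^ p.toReal) atTop (𝓝 0) := by
    filter_upwards [h_lim] with x hx
    have h0 : Tendsto (fun n => ‖F n x - f x‖ₑ) atTop (𝓝 0) := by
      simpa using (tendsto_sub_nhds_zero_iff.2 hx).enorm
    simpa [ENNReal.zero_rpow_of_pos hr] using h0.ennrpow_const p.toReal
  have h_int := tendsto_lintegral_of_dominated_convergence' _
    (fun n => ((hF n).sub hf).enorm.pow_const _) h_le_sub h_fin h_lim'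
  rw [lintegral_zero] at h_int
  simp_rw [eLpNorm_eq_lintegral_rpow_enorm_toReal hp0 hp]
  simpa [ENNReal.zero_rpow_of_pos (inv_pos.2 hr)] using h_int.ennrpow_const (1 / p.toReal)

theorem exists_subseq_tendsto_of_lipschitzWith {X E : Type*} [PseudoMetricSpace X]
    [ProperSpace X] [NormedAddCommGroup E] [ProperSpace E] {K : ℝ≥0} {R : X → ℝ}
    {f : ℕ → X → E} (hf : ∀ n, LipschitzWith K (f n)) (hR : ∀ n x, ‖f n x‖ ≤ R x) :
    ∃ g : X → E, (LipschitzWith K g ∧ ∀ x, ‖g x‖ ≤ R x) ∧ ∃ φ : ℕ → ℕ, StrictMono φ ∧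
      ∀ x, Tendsto (fun k => f (φ k) x) atTop (𝓝 (g x)) := by
  set S : Set C(X, E) := {g | LipschitzWith K g ∧ ∀ x, ‖g x‖ ≤ R x}
  have hS_image : ContinuousMap.toFun '' S =
      {g : X → E | LipschitzWith K g} ∩ univ.pi fun x => closedBall 0 (R x) := by
    ext g
    simp only [mem_inter_iff, mem_ofPred_eq, mem_univ_pi, mem_closedBall_zero_iff]
    refine ⟨?_, fun hg => ⟨⟨g, hg.1.continuous⟩, hg, rfl⟩⟩
    rintro ⟨g, hg, rfl⟩
    exact hg
  have hS : IsCompact S := by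
    refine ArzelaAscoli.isCompact_of_equicontinuous S ?_
      (LipschitzWith.uniformEquicontinuous _ K fun g => g.2.1).equicontinuous
    rw [hS_image]
    exact (isCompact_univ_pi fun x => isCompact_closedBall _ _).of_isClosed_subset
      ((isClosed_setOfPred_lipschitzWith K).inter (isClosed_set_pi fun x _ => isClosed_closedBall))
      inter_subset_right
  obtain ⟨g, hg, φ, hφ, hlim⟩ := hS.tendsto_subseq (x := fun n => ⟨f n, (hf n).continuous⟩)
    fun n => ⟨hf n, hR n⟩
  exact ⟨g, hg, φ, hφ, fun x => ((continuous_eval_const x).tendsto g).comp hlim⟩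

lemma nnnorm_le_of_eLpNorm_le_of_eLpNorm_cosh_smul_deriv_le {E : Type*} [NormedAddCommGroup E]
    [NormedSpace ℝ E] [CompleteSpace E] {f f' : ℝ → E} (hf : ∀ x, HasDerivAt f (f' x) x)
    {A B : ℝ≥0} (hA : eLpNorm f 2 volume ≤ A)
    (hB : eLpNorm (fun x => cosh x • f' x) 2 volume ≤ B) (x : ℝ) :
    ‖f x‖₊ ≤ A + (eLpNorm (fun x : ℝ => (cosh x)⁻¹) 2 volume).toNNReal * B := by
  have hf' : AEStronglyMeasurable f' := by
    rw [show f' = deriv f from funext fun x => (hf x).deriv.symm]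
    exact (stronglyMeasurable_deriv f).aestronglyMeasurable
  have hL1 : eLpNorm f' 1 volume ≤
      ↑((eLpNorm (fun x : ℝ => (cosh x)⁻¹) 2 volume).toNNReal * B) := by
    rw [ENNReal.coe_mul, ENNReal.coe_toNNReal memLp_two_inv_cosh.eLpNorm_lt_top.ne]
    exact (eLpNorm_one_le_eLpNorm_inv_cosh_mul hf').trans (by gcongr)
  have hint : Integrable f' :=
    memLp_one_iff_integrable.1 ⟨hf', hL1.trans_lt ENNReal.coe_lt_top⟩
  obtain ⟨y, -, hy⟩ := exists_mem_Icc_enorm_le_of_eLpNorm_le two_ne_zero ENNReal.ofNat_ne_top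
    (show Differentiable ℝ f from fun x => (hf x).differentiableAt).continuous.aestronglyMeasurable
    hA
  rw [← ENNReal.coe_le_coe, ← enorm_eq_nnnorm, ENNReal.coe_add]
  calc ‖f x‖ₑ ≤ ‖f y‖ₑ + ‖f x - f y‖ₑ := by simpa using enorm_add_le (f y) (f x - f y)
    _ ≤ _ := add_le_add hy ((enorm_sub_le_eLpNorm_one_of_hasDerivAt hf hint x y).trans hL1)

lemma LipschitzWith.norm_le_of_eLpNorm_inv_cosh_smul_le {E : Type*} [NormedAddCommGroup E]
    [NormedSpace ℝ E] {f : ℝ → E} {K B : ℝ≥0} (hf : LipschitzWith K f)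
    (hB : eLpNorm (fun x => (cosh x)⁻¹ • f x) 2 volume ≤ B) (x : ℝ) :
    ‖f x‖ ≤ (cosh 1 * B + K) * (1 + |x|) := by
  obtain ⟨y, hy, hyB⟩ := exists_mem_Icc_enorm_le_of_eLpNorm_le two_ne_zero ENNReal.ofNat_ne_top
    ((continuous_cosh.inv₀ fun x => (cosh_pos x).ne').smul hf.continuous).aestronglyMeasurable hB
  have hy_abs : |y| ≤ 1 := abs_le.2 ⟨by linarith [hy.1], hy.2⟩
  have hfy : ‖f y‖ ≤ cosh 1 * B := by
    have h : ‖(cosh y)⁻¹ • f y‖ ≤ B := by exact_mod_cast enorm_le_coe.1 hyB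
    rw [norm_smul, norm_inv, norm_of_nonneg (cosh_pos y).le, inv_mul_le_iff₀ (cosh_pos y)] at h
    exact h.trans (by gcongr; rwa [cosh_le_cosh, abs_one])
  calc ‖f x‖ ≤ ‖f y‖ + K * ‖x - y‖ := by
        simpa using norm_add_le_of_le (le_refl ‖f y‖) (hf.norm_sub_le x y)
    _ ≤ cosh 1 * B + K * (|x| + 1) := by
        gcongr
        exact (abs_sub _ _).trans (by linarith)
    _ ≤ (cosh 1 * B + K) * (1 + |x|) := by
        nlinarith [mul_nonneg (mul_nonneg (cosh_pos 1).le B.coe_nonneg) (abs_nonneg x)]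

/-- Compactness of the embedding `𝓗²₋ ↪ 𝓗`: any sequence `(uₙ)` with uniformly bounded
`‖cosh·uₙ''‖_{L²}`, `‖uₙ'‖_{L²}`, `‖sech·uₙ‖_{L²}` has a subsequence along which
`sech·u_{n_k}` converges in `L²(ℝ)`. -/
theorem stmt_5 (u du ddu : ℕ → ℝ → ℂ) (C : ℝ)
    (hderiv : ∀ n x, HasDerivAt (u n) (du n x) x)
    (hderiv2 : ∀ n x, HasDerivAt (du n) (ddu n x) x)
    (h1 : ∀ n, eLpNorm (fun x => Real.cosh x • ddu n x) 2 volume ≤ ENNReal.ofReal C)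
    (h2 : ∀ n, eLpNorm (du n) 2 volume ≤ ENNReal.ofReal C)
    (h3 : ∀ n, eLpNorm (fun x => (Real.cosh x)⁻¹ • u n x) 2 volume ≤ ENNReal.ofReal C) :
    ∃ φ : ℕ → ℕ, StrictMono φ ∧ ∃ g : ℝ → ℂ, MemLp g 2 (volume : Measure ℝ) ∧
      Tendsto (fun k => eLpNorm (fun x => (Real.cosh x)⁻¹ • u (φ k) x - g x) 2 volume)
        atTop (nhds 0) := by
  -- `ENNReal.ofReal C` is `↑C.toNNReal` by definition.
  set B : ℝ≥0 := C.toNNReal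
  set K : ℝ≥0 := B + (eLpNorm (fun x : ℝ => (cosh x)⁻¹) 2 volume).toNNReal * B
  have hu_lip (n : ℕ) : LipschitzWith K (u n) :=
    lipschitzWith_of_nnnorm_deriv_le (fun x => (hderiv n x).differentiableAt) fun x =>
      (hderiv n x).deriv ▸
        nnnorm_le_of_eLpNorm_le_of_eLpNorm_cosh_smul_deriv_le (hderiv2 n) (h2 n) (h1 n) x
  set a : ℝ := cosh 1 * B + K
  have hu_growth (n : ℕ) (x : ℝ) : ‖u n x‖ ≤ a * (1 + |x|) :=
    (hu_lip n).norm_le_of_eLpNorm_inv_cosh_smul_le (h3 n) x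
  obtain ⟨h, ⟨h_lip, h_growth⟩, φ, hφ, hlim⟩ :=
    exists_subseq_tendsto_of_lipschitzWith hu_lip hu_growth
  have h_dom : MemLp (fun x => a * ((1 + |x|) * (cosh x)⁻¹)) 2 :=
    memLp_two_one_add_abs_mul_inv_cosh.const_mul a
  have h_weighted_le {f : ℝ → ℂ} (hf : ∀ x, ‖f x‖ ≤ a * (1 + |x|)) (x : ℝ) :
      ‖(cosh x)⁻¹ • f x‖ ≤ a * ((1 + |x|) * (cosh x)⁻¹) := by
    rw [norm_smul, norm_inv, norm_of_nonneg (cosh_pos x).le, ← mul_assoc, mul_comm]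
    exact mul_le_mul_of_nonneg_right (hf x) (inv_pos.2 (cosh_pos x)).le
  have h_weight : Continuous fun x : ℝ => (cosh x)⁻¹ :=
    continuous_cosh.inv₀ fun x => (cosh_pos x).ne'
  refine ⟨φ, hφ, fun x => (cosh x)⁻¹ • h x,
    h_dom.of_le (h_weight.smul h_lip.continuous).aestronglyMeasurable
      (ae_of_all _ fun x => (h_weighted_le h_growth x).trans (le_abs_self _)), ?_⟩
  exact tendsto_eLpNorm_sub_of_dominated two_ne_zero ENNReal.ofNat_ne_top
    (fun k => (h_weight.smul (hu_lip (φ k)).continuous).aestronglyMeasurable) h_dom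
    (fun k => ae_of_all _ (h_weighted_le (hu_growth (φ k))))
    (ae_of_all _ fun x => (hlim x).const_smul _)
end

section
/- For every c ∈ ℝ there exists a smooth function U: ℝ → ℂ such that |U(ξ)| < 1 for all ξ ∈ ℝ, |U(ξ)| → 1 as |ξ| → ∞, and U''(ξ) − 2ic(1 − |U(ξ)|²)U'(ξ) + 2(1 − |U(ξ)|²)U(ξ) = 0 for all ξ ∈ ℝ. Moreover, if c ≠ 0, then the solution U can be chosen so that in addition |U(ξ)|² ≥ (c² + 2 − 2√(1+c²))/c² > 0 for all ξ ∈ ℝ. -/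
open MeasureTheory Real Filter

noncomputable section

/-- numerator of the soliton profile -/
def solN (c ξ : ℝ) : ℂ := (c * Real.cosh (2*ξ) : ℝ) - Complex.I * (Real.sinh (2*ξ) : ℝ)

/-- denominator (real, positive) -/
def solDR (c ξ : ℝ) : ℝ := Real.sqrt (1 + c^2) * Real.cosh (2*ξ) + 1

/-- the soliton profile -/
def solU (c ξ : ℝ) : ℂ := solN c ξ / (solDR c ξ : ℝ)

/-- numerator of the first derivative -/
def solP (c ξ : ℝ) : ℂ := (2*c*Real.sinh (2*ξ) : ℝ)
  - 2 * Complex.I * ((Real.cosh (2*ξ) : ℝ) + (Real.sqrt (1+c^2) : ℝ))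

end

section

variable (c : ℝ)

lemma hk1 : 1 ≤ Real.sqrt (1 + c^2) := by
  have h := Real.sqrt_le_sqrt (show (1:ℝ) ≤ 1+c^2 by nlinarith [sq_nonneg c])
  simpa using h

lemma hk2 : (Real.sqrt (1 + c^2))^2 = 1 + c^2 := Real.sq_sqrt (by positivity)

lemma solDR_pos (ξ : ℝ) : 0 < solDR c ξ := by
  have h1 := hk1 c
  have h2 := Real.one_le_cosh (2*ξ)
  have : 1 ≤ Real.sqrt (1+c^2) * Real.cosh (2*ξ) := one_le_mul_of_one_le_of_one_le h1 h2
  unfold solDR; linarith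

lemma solDR_ge (ξ : ℝ) : Real.sqrt (1+c^2) + 1 ≤ solDR c ξ := by
  have h1 := hk1 c
  have h2 := Real.one_le_cosh (2*ξ)
  have : Real.sqrt (1+c^2) * 1 ≤ Real.sqrt (1+c^2) * Real.cosh (2*ξ) := by nlinarith
  unfold solDR; linarith

lemma solD_ne (ξ : ℝ) : ((solDR c ξ : ℝ) : ℂ) ≠ 0 := by
  exact_mod_cast (solDR_pos c ξ).ne'

/-- cosh/sinh relation -/
lemma hcs (ξ : ℝ) : ((Real.cosh (2*ξ) : ℝ) : ℂ)^2 - ((Real.sinh (2*ξ) : ℝ) : ℂ)^2 = 1 := by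
  have := Real.cosh_sq_sub_sinh_sq (2*ξ)
  have h2 : ((Real.cosh (2*ξ) : ℝ) : ℂ)^2 - ((Real.sinh (2*ξ) : ℝ) : ℂ)^2
      = ((Real.cosh (2*ξ)^2 - Real.sinh (2*ξ)^2 : ℝ) : ℂ) := by push_cast; ring
  rw [h2, this, Complex.ofReal_one]

lemma norm_solU_sq (ξ : ℝ) : ‖solU c ξ‖^2 = 1 - 2 / solDR c ξ := by
  have hd := solDR_pos c ξ
  have hcs' := Real.cosh_sq_sub_sinh_sq (2*ξ)
  have hk2' := hk2 c
  have hnum : ‖solN c ξ‖^2 = (c * Real.cosh (2*ξ))^2 + (Real.sinh (2*ξ))^2 := by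
    rw [Complex.sq_norm, Complex.normSq_apply]
    simp only [solN, Complex.sub_re, Complex.sub_im, Complex.mul_re, Complex.mul_im,
      Complex.I_re, Complex.I_im, Complex.ofReal_re, Complex.ofReal_im]
    ring
  have : ‖solU c ξ‖^2 = ‖solN c ξ‖^2 / (solDR c ξ)^2 := by
    rw [solU, norm_div, div_pow]
    congr 1
    rw [Complex.norm_real, Real.norm_eq_abs, abs_of_pos hd]
  rw [this, hnum]
  have key : (c * Real.cosh (2*ξ))^2 + (Real.sinh (2*ξ))^2
      = (Real.sqrt (1+c^2) * Real.cosh (2*ξ) - 1) * (Real.sqrt (1+c^2) * Real.cosh (2*ξ) + 1) := by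
    nlinarith [hk2', hcs']
  rw [key]
  unfold solDR at *
  field_simp
  ring

end

section
variable (c : ℝ)

lemma hcoshD (ξ : ℝ) : HasDerivAt (fun ξ : ℝ => Real.cosh (2*ξ)) (2 * Real.sinh (2*ξ)) ξ := by
  have h := (Real.hasDerivAt_cosh (2*ξ)).comp ξ ((hasDerivAt_id ξ).const_mul 2)
  simpa [Function.comp_def, mul_comm] using h

lemma hsinhD (ξ : ℝ) : HasDerivAt (fun ξ : ℝ => Real.sinh (2*ξ)) (2 * Real.cosh (2*ξ)) ξ := by
  have h := (Real.hasDerivAt_sinh (2*ξ)).comp ξ ((hasDerivAt_id ξ).const_mul 2)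
  simpa [Function.comp_def, mul_comm] using h

lemma hN (ξ : ℝ) : HasDerivAt (solN c)
    (((2*c*Real.sinh (2*ξ) : ℝ) : ℂ) - Complex.I * ((2*Real.cosh (2*ξ) : ℝ) : ℂ)) ξ := by
  have h1 : HasDerivAt (fun ξ : ℝ => ((c * Real.cosh (2*ξ) : ℝ) : ℂ))
      (((c * (2 * Real.sinh (2*ξ)) : ℝ)) : ℂ) ξ := ((hcoshD ξ).const_mul c).ofReal_comp
  have h2 : HasDerivAt (fun ξ : ℝ => Complex.I * ((Real.sinh (2*ξ) : ℝ) : ℂ))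
      (Complex.I * ((2 * Real.cosh (2*ξ) : ℝ) : ℂ)) ξ := ((hsinhD ξ).ofReal_comp).const_mul _
  have := h1.sub h2
  refine this.congr_deriv ?_
  push_cast
  ring

lemma hDc (ξ : ℝ) : HasDerivAt (fun ξ : ℝ => ((solDR c ξ : ℝ) : ℂ))
    ((2 * Real.sqrt (1+c^2) * Real.sinh (2*ξ) : ℝ) : ℂ) ξ := by
  have h1 : HasDerivAt (fun ξ : ℝ => solDR c ξ)
      (Real.sqrt (1+c^2) * (2 * Real.sinh (2*ξ))) ξ := by
    unfold solDR
    exact ((hcoshD ξ).const_mul _).add_const 1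
  have := h1.ofReal_comp
  convert this using 2
  ring

lemma hU' (ξ : ℝ) : HasDerivAt (solU c) (solP c ξ / ((solDR c ξ : ℝ) : ℂ)^2) ξ := by
  have h := (hN c ξ).div (hDc c ξ) (solD_ne c ξ)
  refine h.congr_deriv ?_
  have hnum : (((2*c*Real.sinh (2*ξ) : ℝ) : ℂ) - Complex.I * ((2*Real.cosh (2*ξ) : ℝ) : ℂ))
        * ((solDR c ξ : ℝ) : ℂ) - solN c ξ * ((2 * Real.sqrt (1+c^2) * Real.sinh (2*ξ) : ℝ) : ℂ)
      = solP c ξ := by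
    unfold solN solP solDR
    push_cast [-Complex.ofReal_cosh, -Complex.ofReal_sinh]
    linear_combination (-2*Complex.I*(Real.sqrt (1+c^2) : ℂ)) * (hcs ξ)
  rw [← hnum]

lemma hP (ξ : ℝ) : HasDerivAt (solP c) (4 * solN c ξ) ξ := by
  have h1 : HasDerivAt (fun ξ : ℝ => ((2*c*Real.sinh (2*ξ) : ℝ) : ℂ))
      ((2*c*(2*Real.cosh (2*ξ)) : ℝ) : ℂ) ξ := by
    have : HasDerivAt (fun ξ : ℝ => 2*c*Real.sinh (2*ξ)) (2*c*(2*Real.cosh (2*ξ))) ξ :=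
      (hsinhD ξ).const_mul _
    exact this.ofReal_comp
  have h2 : HasDerivAt (fun ξ : ℝ => 2 * Complex.I * (((Real.cosh (2*ξ) : ℝ) : ℂ) + (Real.sqrt (1+c^2) : ℝ)))
      (2 * Complex.I * ((2*Real.sinh (2*ξ) : ℝ) : ℂ)) ξ := by
    have : HasDerivAt (fun ξ : ℝ => ((Real.cosh (2*ξ) : ℝ) : ℂ) + ((Real.sqrt (1+c^2) : ℝ) : ℂ))
        ((2*Real.sinh (2*ξ) : ℝ) : ℂ) ξ := ((hcoshD ξ).ofReal_comp).add_const ((Real.sqrt (1+c^2) : ℝ) : ℂ)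
    exact this.const_mul (2 * Complex.I)
  have := h1.sub h2
  refine this.congr_deriv ?_
  unfold solN
  push_cast
  ring

lemma hU'' (ξ : ℝ) : HasDerivAt (fun ξ => solP c ξ / ((solDR c ξ : ℝ) : ℂ)^2)
    ((4 * solN c ξ * ((solDR c ξ : ℝ) : ℂ)^2
      - solP c ξ * (2 * ((solDR c ξ : ℝ) : ℂ) * ((2 * Real.sqrt (1+c^2) * Real.sinh (2*ξ) : ℝ) : ℂ)))
      / (((solDR c ξ : ℝ) : ℂ)^2)^2) ξ := by
  have hD2 : HasDerivAt (fun ξ : ℝ => ((solDR c ξ : ℝ) : ℂ)^2)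
      (2 * ((solDR c ξ : ℝ) : ℂ) * ((2 * Real.sqrt (1+c^2) * Real.sinh (2*ξ) : ℝ) : ℂ)) ξ := by
    have h := (hDc c ξ).mul (hDc c ξ)
    have he : (fun ξ : ℝ => ((solDR c ξ : ℝ) : ℂ)^2)
        = fun ξ : ℝ => ((solDR c ξ : ℝ) : ℂ) * ((solDR c ξ : ℝ) : ℂ) := by
      funext x; ring
    rw [he]
    refine h.congr_deriv ?_
    ring
  exact (hP c ξ).div hD2 (pow_ne_zero 2 (solD_ne c ξ))

end

/-- Existence of traveling dark solitons for every speed `c`: a smooth profile `U` with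
`|U| < 1`, `|U(ξ)| → 1` as `|ξ| → ∞`, solving `U'' - 2ic(1-|U|²)U' + 2(1-|U|²)U = 0`;
moreover for `c ≠ 0` it can be chosen with `|U|² ≥ (c²+2-2√(1+c²))/c² > 0`. -/
theorem stmt_11 (c : ℝ) :
    ∃ U : ℝ → ℂ, ContDiff ℝ (⊤ : ℕ∞) U ∧
      (∀ ξ : ℝ, ‖U ξ‖ < 1) ∧
      Tendsto (fun ξ : ℝ => ‖U ξ‖) (cocompact ℝ) (nhds 1) ∧
      (∀ ξ : ℝ, deriv (deriv U) ξ
          - 2 * Complex.I * (c : ℂ) * ((1 - ‖U ξ‖^2 : ℝ) : ℂ) * deriv U ξ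
          + 2 * ((1 - ‖U ξ‖^2 : ℝ) : ℂ) * U ξ = 0) ∧
      (c ≠ 0 →
        0 < (c^2 + 2 - 2 * Real.sqrt (1 + c^2)) / c^2 ∧
        ∀ ξ : ℝ, ‖U ξ‖^2 ≥ (c^2 + 2 - 2 * Real.sqrt (1 + c^2)) / c^2) := by
  refine ⟨solU c, ?_, ?_, ?_, ?_, ?_⟩
  · -- smoothness
    have h2x : ContDiff ℝ (⊤ : ℕ∞) (fun ξ : ℝ => 2*ξ) := contDiff_const.mul contDiff_id
    have hch : ContDiff ℝ (⊤ : ℕ∞) (fun ξ : ℝ => Real.cosh (2*ξ)) := Real.contDiff_cosh.comp h2x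
    have hsh : ContDiff ℝ (⊤ : ℕ∞) (fun ξ : ℝ => Real.sinh (2*ξ)) := Real.contDiff_sinh.comp h2x
    have hNc : ContDiff ℝ (⊤ : ℕ∞) (solN c) := by
      unfold solN
      exact (Complex.ofRealCLM.contDiff.comp (contDiff_const.mul hch)).sub
        (contDiff_const.mul (Complex.ofRealCLM.contDiff.comp hsh))
    have hDR : ContDiff ℝ (⊤ : ℕ∞) (fun ξ : ℝ => solDR c ξ) := by
      unfold solDR
      exact (contDiff_const.mul hch).add contDiff_const
    have hinv : ContDiff ℝ (⊤ : ℕ∞) (fun ξ : ℝ => (solDR c ξ)⁻¹) :=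
      hDR.inv (fun ξ => (solDR_pos c ξ).ne')
    have heq : solU c = fun ξ : ℝ => solN c ξ * ((((solDR c ξ)⁻¹ : ℝ)) : ℂ) := by
      funext ξ
      rw [solU, div_eq_mul_inv, Complex.ofReal_inv]
    rw [heq]
    exact hNc.mul (Complex.ofRealCLM.contDiff.comp hinv)
  · -- norm < 1
    intro ξ
    have h1 := norm_solU_sq c ξ
    have h2 := solDR_pos c ξ
    have h3 : 0 < 2 / solDR c ξ := by positivity
    nlinarith [norm_nonneg (solU c ξ)]
  · -- tendsto
    have hnormeq : (fun ξ : ℝ => ‖solU c ξ‖) = fun ξ => Real.sqrt (1 - 2 / solDR c ξ) := by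
      funext ξ
      rw [← norm_solU_sq c ξ, Real.sqrt_sq (norm_nonneg _)]
    rw [hnormeq]
    have hcosh : Tendsto Real.cosh atTop atTop := by
      apply tendsto_atTop_mono (fun x => ?_) (Real.tendsto_exp_atTop.atTop_div_const two_pos)
      rw [Real.cosh_eq]
      have := Real.exp_pos (-x)
      linarith
    have habs : Tendsto (fun ξ : ℝ => |2*ξ|) (cocompact ℝ) atTop := by
      have h := tendsto_norm_cocompact_atTop (E := ℝ)
      have : (fun ξ : ℝ => |2*ξ|) = fun ξ : ℝ => 2 * ‖ξ‖ := by
        funext ξ; rw [abs_mul, Real.norm_eq_abs]; norm_num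
      rw [this]
      exact h.const_mul_atTop two_pos
    have hcosh2 : Tendsto (fun ξ : ℝ => Real.cosh (2*ξ)) (cocompact ℝ) atTop := by
      have : (fun ξ : ℝ => Real.cosh (2*ξ)) = fun ξ : ℝ => Real.cosh |2*ξ| := by
        funext ξ; rw [Real.cosh_abs]
      rw [this]
      exact hcosh.comp habs
    have hDtop : Tendsto (fun ξ : ℝ => solDR c ξ) (cocompact ℝ) atTop := by
      unfold solDR
      have hk0 : 0 < Real.sqrt (1+c^2) := lt_of_lt_of_le one_pos (hk1 c)
      exact tendsto_atTop_add_const_right _ 1 (hcosh2.const_mul_atTop hk0)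
    have h0 : Tendsto (fun ξ : ℝ => 1 - 2 / solDR c ξ) (cocompact ℝ) (nhds 1) := by
      have hz : Tendsto (fun ξ : ℝ => 2 / solDR c ξ) (cocompact ℝ) (nhds 0) :=
        Tendsto.div_atTop tendsto_const_nhds hDtop
      have h1 : Tendsto (fun _ : ℝ => (1:ℝ)) (cocompact ℝ) (nhds 1) := tendsto_const_nhds
      simpa using h1.sub hz
    have := (Real.continuous_sqrt.tendsto 1).comp h0
    simpa [Function.comp_def] using this
  · -- ODE
    intro ξ
    have hd1 : deriv (solU c) = fun ξ => solP c ξ / ((solDR c ξ : ℝ) : ℂ)^2 :=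
      funext fun ξ => (hU' c ξ).deriv
    rw [hd1, (hU'' c ξ).deriv]
    have hρ : ((1 - ‖solU c ξ‖^2 : ℝ) : ℂ) = 2 / ((solDR c ξ : ℝ) : ℂ) := by
      rw [norm_solU_sq c ξ]
      have h2 := (solDR_pos c ξ).ne'
      push_cast
      ring
    rw [hρ]
    have hUdef : solU c ξ = solN c ξ / ((solDR c ξ : ℝ) : ℂ) := rfl
    rw [hUdef]
    have hk2c : ((Real.sqrt (1+c^2) : ℝ) : ℂ)^2 = 1 + (c:ℂ)^2 := by
      exact_mod_cast congrArg (fun x : ℝ => (x:ℂ)) (hk2 c)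
    have hkey : 8 * solN c ξ * ((solDR c ξ : ℝ) : ℂ)
        - 4 * solP c ξ * (((Real.sqrt (1+c^2) : ℝ) : ℂ) * ((Real.sinh (2*ξ) : ℝ) : ℂ)
          + Complex.I * (c : ℂ)) = 0 := by
      unfold solN solP solDR
      push_cast [-Complex.ofReal_cosh, -Complex.ofReal_sinh]
      linear_combination (8*(c:ℂ)*((Real.sqrt (1+c^2) : ℝ) : ℂ)) * hcs ξ
        + (8*Complex.I*((Real.sinh (2*ξ) : ℝ) : ℂ)) * hk2c
        + (8*(c:ℂ)*(((Real.cosh (2*ξ) : ℝ) : ℂ) + ((Real.sqrt (1+c^2) : ℝ) : ℂ))) * Complex.I_sq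
    have hdne := solD_ne c ξ
    have hsplit : ((2 * Real.sqrt (1+c^2) * Real.sinh (2*ξ) : ℝ) : ℂ)
        = 2 * ((Real.sqrt (1+c^2) : ℝ) : ℂ) * ((Real.sinh (2*ξ) : ℝ) : ℂ) := by push_cast; ring
    rw [hsplit]
    field_simp
    push_cast
    push_cast at hkey
    linear_combination hkey
  · -- lower bound for c ≠ 0
    intro hc
    have hc2 : 0 < c^2 := by positivity
    have hkgt : 1 < Real.sqrt (1+c^2) := by
      have h1 : (1:ℝ) < 1 + c^2 := by linarith
      nlinarith [hk2 c, hk1 c]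
    set k := Real.sqrt (1+c^2) with hkdef
    have hrho : (c^2 + 2 - 2*k)/c^2 = (k-1)/(k+1) := by
      rw [div_eq_div_iff hc2.ne' (by nlinarith : (Real.sqrt (1+c^2)+1) ≠ 0)]
      linear_combination (-2 : ℝ) * (hk2 c)
    constructor
    · rw [hrho]
      exact div_pos (by linarith) (by linarith)
    · intro ξ
      rw [hrho, norm_solU_sq c ξ]
      have hge := solDR_ge c ξ
      have hdpos := solDR_pos c ξ
      rw [ge_iff_le, div_le_iff₀ (by linarith), sub_mul]
      have h2 : 2 / solDR c ξ * (k+1) ≤ 2 := by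
        rw [div_mul_eq_mul_div, div_le_iff₀ hdpos]
        nlinarith
      nlinarith
end

section
/- There exist c₁ > 0 and B > 0 such that for every c with |c| < c₁ there exists an even, real-valued, twice weakly differentiable function η ∈ H²(ℝ) satisfying −η''(x) + 4η(x) − 12·sech²(x)·η(x) + 2c²·(sech²(x) − η(x))² + 6η(x)² = 0 for all x ∈ ℝ, together with the bounds ‖η‖_{H²(ℝ)} ≤ B·c² and |η(x)| ≤ B·c²·sech²(x) for all x ∈ ℝ. -/
/-!
The equation has the exact solution `η = a sech²` with `a = c² / (3 + c²)`: since
`(sech²)'' = 4 sech² - 6 sech⁴`, substituting `a sech²` turns the left-hand side into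
`sech⁴ (6a² - 6a + 2c²(1 - a)²)`, and this `a` is the small root of that quadratic.
As `a ≤ c²/3`, the pointwise bound is immediate; `η`, `η'`, `η''` are all `O(a sech²)`, so their
squares are dominated by multiples of `a² / (1 + x²)`, whose integral is `π a²`.
-/

open MeasureTheory Real Filter

theorem memLp_two_of_sq_le {α : Type*} [MeasurableSpace α] {μ : Measure α} {f g : α → ℝ}
    (hf : AEStronglyMeasurable f μ) (hg : Integrable g μ) (hfg : ∀ x, f x ^ 2 ≤ g x) :
    MemLp f 2 μ :=
  (memLp_two_iff_integrable_sq hf).2 <| hg.mono' (hf.pow 2) <|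
    .of_forall fun x => by simpa [Real.norm_eq_abs, abs_of_nonneg (sq_nonneg (f x))] using hfg x

theorem eLpNorm_two_sq_le_of_sq_le {α : Type*} [MeasurableSpace α] {μ : Measure α} {f g : α → ℝ}
    (hf : AEStronglyMeasurable f μ) (hg : Integrable g μ) (hfg : ∀ x, f x ^ 2 ≤ g x) :
    eLpNorm f 2 μ ^ 2 ≤ ENNReal.ofReal (∫ x, g x ∂μ) := by
  have hf2 := memLp_two_of_sq_le hf hg hfg
  rw [hf2.eLpNorm_eq_integral_rpow_norm two_ne_zero ENNReal.ofNat_ne_top,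
    ← ENNReal.ofReal_pow (by positivity), ENNReal.toReal_ofNat, ← Real.rpow_natCast,
    ← Real.rpow_mul (integral_nonneg fun _ => by positivity)]
  norm_num
  exact ENNReal.ofReal_le_ofReal <| integral_mono hf2.integrable_sq hg fun x => by simpa using hfg x

namespace Real

theorem sq_le_sinh_sq (x : ℝ) : x ^ 2 ≤ sinh x ^ 2 := by
  rcases le_total 0 x with hx | hx
  · nlinarith [self_le_sinh_iff.2 hx]
  · nlinarith [self_le_sinh_iff.2 (neg_nonneg.2 hx), sinh_neg x]

theorem inv_cosh_sq_le_inv_one_add_sq (x : ℝ) : (cosh x)⁻¹ ^ 2 ≤ (1 + x ^ 2)⁻¹ := by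
  rw [inv_pow, cosh_sq']
  gcongr (1 + ?_)⁻¹
  exact sq_le_sinh_sq x

theorem inv_cosh_sq_le_one (x : ℝ) : (cosh x)⁻¹ ^ 2 ≤ 1 :=
  pow_le_one₀ (by positivity) (inv_le_one_of_one_le₀ (one_le_cosh x))

theorem tanh_sq_add_inv_cosh_sq (x : ℝ) : tanh x ^ 2 + (cosh x)⁻¹ ^ 2 = 1 := by
  have := (cosh_pos x).ne'
  rw [tanh_eq_sinh_div_cosh]
  field_simp
  linear_combination sinh_sq x

theorem hasDerivAt_tanh (x : ℝ) : HasDerivAt tanh ((cosh x)⁻¹ ^ 2) x := by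
  have hc := (cosh_pos x).ne'
  have h := (hasDerivAt_sinh x).div (hasDerivAt_cosh x) hc
  rw [show tanh = fun y => sinh y / cosh y from funext tanh_eq_sinh_div_cosh]
  refine h.congr_deriv ?_
  field_simp
  linear_combination -sinh_sq x

@[fun_prop]
theorem continuous_tanh : Continuous tanh :=
  continuous_iff_continuousAt.2 fun x => (hasDerivAt_tanh x).continuousAt

theorem hasDerivAt_inv_cosh_sq (x : ℝ) :
    HasDerivAt (fun y => (cosh y)⁻¹ ^ 2) (-2 * (cosh x)⁻¹ ^ 2 * tanh x) x := by
  have hs : (fun y => (cosh y)⁻¹ ^ 2) = fun y => 1 - tanh y ^ 2 :=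
    funext fun y => eq_sub_of_add_eq' (tanh_sq_add_inv_cosh_sq y)
  rw [hs]
  refine (((hasDerivAt_tanh x).fun_pow 2).const_sub 1).congr_deriv ?_
  ring

theorem hasDerivAt_inv_cosh_sq_mul_tanh (x : ℝ) :
    HasDerivAt (fun y => (cosh y)⁻¹ ^ 2 * tanh y)
      ((cosh x)⁻¹ ^ 2 * (3 * (cosh x)⁻¹ ^ 2 - 2)) x := by
  refine ((hasDerivAt_inv_cosh_sq x).mul (hasDerivAt_tanh x)).congr_deriv ?_
  linear_combination (-2 * (cosh x)⁻¹ ^ 2) * tanh_sq_add_inv_cosh_sq x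

theorem abs_inv_cosh_sq_mul_tanh_le (x : ℝ) :
    |(cosh x)⁻¹ ^ 2 * tanh x| ≤ (cosh x)⁻¹ ^ 2 := by
  rw [abs_mul, abs_of_nonneg (by positivity)]
  exact mul_le_of_le_one_right (by positivity) (abs_tanh_lt_one x).le

theorem abs_inv_cosh_sq_mul_three_mul_sub_two_le (x : ℝ) :
    |(cosh x)⁻¹ ^ 2 * (3 * (cosh x)⁻¹ ^ 2 - 2)| ≤ 2 * (cosh x)⁻¹ ^ 2 := by
  have hs0 : 0 ≤ (cosh x)⁻¹ ^ 2 := by positivity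
  have hs1 := inv_cosh_sq_le_one x
  rw [abs_mul, abs_of_nonneg hs0, mul_comm]
  gcongr
  exact abs_le.2 ⟨by linarith, by linarith⟩

end Real

theorem memLp_two_of_abs_le_mul_inv_cosh_sq {f : ℝ → ℝ} {M : ℝ} (hf : AEStronglyMeasurable f)
    (hb : ∀ x, |f x| ≤ M * (cosh x)⁻¹ ^ 2) :
    MemLp f 2 volume ∧ eLpNorm f 2 volume ^ 2 ≤ ENNReal.ofReal (π * M ^ 2) := by
  have hg : Integrable (fun x : ℝ => M ^ 2 * (1 + x ^ 2)⁻¹) := integrable_inv_one_add_sq.const_mul _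
  have hfg (x : ℝ) : f x ^ 2 ≤ M ^ 2 * (1 + x ^ 2)⁻¹ := by
    have hs := inv_cosh_sq_le_one x
    have hs0 : 0 ≤ (cosh x)⁻¹ ^ 2 := by positivity
    calc f x ^ 2 = |f x| ^ 2 := (sq_abs _).symm
      _ ≤ (M * (cosh x)⁻¹ ^ 2) ^ 2 := pow_le_pow_left₀ (abs_nonneg _) (hb x) 2
      _ = M ^ 2 * ((cosh x)⁻¹ ^ 2 * (cosh x)⁻¹ ^ 2) := by ring
      _ ≤ M ^ 2 * (1 * (1 + x ^ 2)⁻¹) := by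
        gcongr
        exact inv_cosh_sq_le_inv_one_add_sq x
      _ = M ^ 2 * (1 + x ^ 2)⁻¹ := by rw [one_mul]
  refine ⟨memLp_two_of_sq_le hf hg hfg, ?_⟩
  convert eLpNorm_two_sq_le_of_sq_le hf hg hfg using 2
  rw [integral_const_mul, integral_univ_inv_one_add_sq, mul_comm]

theorem inv_cosh_sq_profile_memLp_and_eLpNorm_sq_le {a : ℝ} (ha : 0 ≤ a) :
    MemLp (fun x => a * (cosh x)⁻¹ ^ 2) 2 volume ∧
    MemLp (fun x => -2 * a * ((cosh x)⁻¹ ^ 2 * tanh x)) 2 volume ∧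
    MemLp (fun x => -2 * a * ((cosh x)⁻¹ ^ 2 * (3 * (cosh x)⁻¹ ^ 2 - 2))) 2 volume ∧
    eLpNorm (fun x => a * (cosh x)⁻¹ ^ 2) 2 volume ^ 2
        + eLpNorm (fun x => -2 * a * ((cosh x)⁻¹ ^ 2 * tanh x)) 2 volume ^ 2
        + eLpNorm (fun x => -2 * a * ((cosh x)⁻¹ ^ 2 * (3 * (cosh x)⁻¹ ^ 2 - 2))) 2 volume ^ 2
      ≤ ENNReal.ofReal (21 * π * a ^ 2) := by
  have hs : Continuous fun x => (cosh x)⁻¹ ^ 2 :=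
    (continuous_cosh.inv₀ fun x => (cosh_pos x).ne').pow 2
  have h2a : |-2 * a| = 2 * a := by rw [abs_of_nonpos (by linarith)]; ring
  obtain ⟨hL0, hN0⟩ := memLp_two_of_abs_le_mul_inv_cosh_sq (M := a)
    (by fun_prop : Continuous fun x => a * (cosh x)⁻¹ ^ 2).aestronglyMeasurable
    fun x => by rw [abs_of_nonneg (by positivity)]
  obtain ⟨hL1, hN1⟩ := memLp_two_of_abs_le_mul_inv_cosh_sq (M := 2 * a)
    (by fun_prop : Continuous fun x => -2 * a * ((cosh x)⁻¹ ^ 2 * tanh x)).aestronglyMeasurable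
    fun x => by
      rw [abs_mul, h2a]
      nlinarith [abs_inv_cosh_sq_mul_tanh_le x]
  obtain ⟨hL2, hN2⟩ := memLp_two_of_abs_le_mul_inv_cosh_sq (M := 4 * a)
    (by fun_prop : Continuous fun x =>
      -2 * a * ((cosh x)⁻¹ ^ 2 * (3 * (cosh x)⁻¹ ^ 2 - 2))).aestronglyMeasurable
    fun x => by
      rw [abs_mul, h2a]
      nlinarith [abs_inv_cosh_sq_mul_three_mul_sub_two_le x]
  refine ⟨hL0, hL1, hL2, ?_⟩
  calc _ ≤ ENNReal.ofReal (π * a ^ 2) + ENNReal.ofReal (π * (2 * a) ^ 2)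
        + ENNReal.ofReal (π * (4 * a) ^ 2) := by gcongr
    _ = ENNReal.ofReal (21 * π * a ^ 2) := by
      rw [← ENNReal.ofReal_add (by positivity) (by positivity),
        ← ENNReal.ofReal_add (by positivity) (by positivity)]
      ring_nf

/-- The correction `η = |U_c|² - tanh²` of the squared modulus of a dark soliton: for `|c|`
small there exists an even `η ∈ H²(ℝ)` solving `L₀η + 2c²(sech² - η)² + 6η² = 0` with
`‖η‖_{H²} ≤ B c²` and the pointwise weighted bound `|η(x)| ≤ B c² sech²(x)`. -/
theorem stmt_13 :
    ∃ c₁ : ℝ, 0 < c₁ ∧ ∃ B : ℝ, 0 < B ∧ ∀ c : ℝ, |c| < c₁ →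
      ∃ η η' η'' : ℝ → ℝ,
        (∀ x, HasDerivAt η (η' x) x) ∧ (∀ x, HasDerivAt η' (η'' x) x) ∧
        (∀ x : ℝ, η (-x) = η x) ∧
        MemLp η 2 (volume : Measure ℝ) ∧
        MemLp η' 2 (volume : Measure ℝ) ∧
        MemLp η'' 2 (volume : Measure ℝ) ∧
        (∀ x : ℝ, -η'' x + 4 * η x - 12 * ((Real.cosh x)⁻¹)^2 * η x
          + 2 * c^2 * (((Real.cosh x)⁻¹)^2 - η x)^2 + 6 * η x ^ 2 = 0) ∧
        (eLpNorm η 2 volume) ^ 2 + (eLpNorm η' 2 volume) ^ 2 + (eLpNorm η'' 2 volume) ^ 2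
          ≤ ENNReal.ofReal (B^2 * c^4) ∧
        (∀ x : ℝ, |η x| ≤ B * c^2 * ((Real.cosh x)⁻¹)^2) := by
  refine ⟨1, one_pos, 4, by norm_num, fun c _ => ?_⟩
  set a := c ^ 2 / (3 + c ^ 2) with ha
  have ha0 : 0 ≤ a := by positivity
  have ha3 : a ≤ c ^ 2 / 3 :=
    div_le_div_of_nonneg_left (sq_nonneg c) (by norm_num) (by linarith [sq_nonneg c])
  have hroot : 6 * a ^ 2 - 6 * a + 2 * c ^ 2 * (1 - a) ^ 2 = 0 := by
    rw [ha]
    field_simp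
    ring
  obtain ⟨hL0, hL1, hL2, hN⟩ := inv_cosh_sq_profile_memLp_and_eLpNorm_sq_le ha0
  refine ⟨_, _, _, fun x => ((hasDerivAt_inv_cosh_sq x).const_mul a).congr_deriv (by ring),
    fun x => (hasDerivAt_inv_cosh_sq_mul_tanh x).const_mul _, fun x => by rw [cosh_neg],
    hL0, hL1, hL2, fun x => by linear_combination (cosh x)⁻¹ ^ 4 * hroot, hN.trans ?_,
    fun x => ?_⟩
  · have := pow_le_pow_left₀ ha0 ha3 2
    exact ENNReal.ofReal_le_ofReal (by nlinarith [pi_lt_four, sq_nonneg a])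
  · rw [abs_of_nonneg (by positivity)]
    gcongr
    linarith
end

section
/- There exist c₀ > 0 and C > 0 such that for every c ∈ (−c₀, c₀) there exists a smooth U_c: ℝ → ℂ with |U_c| < 1, |U_c(ξ)| → 1 as |ξ| → ∞, solving U_c'' − 2ic(1−|U_c|²)U_c' + 2(1−|U_c|²)U_c = 0 on ℝ, such that the mass M(U_c) := ∫_ℝ (1 − |U_c(ξ)|²)² dξ satisfies |M(U_c) − 4/3| ≤ C·c². -/
open MeasureTheory Real Filter

noncomputable section DarkSolitonAux

def uu (b c x : ℝ) : ℝ := b * c * Real.cosh (2*x) / (b + Real.cosh (2*x))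
def vv (b x : ℝ) : ℝ := -(b * Real.sinh (2*x)) / (b + Real.cosh (2*x))
def uu' (b c x : ℝ) : ℝ := 2*c*b^2*Real.sinh (2*x) / (b + Real.cosh (2*x))^2
def vv' (b x : ℝ) : ℝ := -(2*b*(1+b*Real.cosh (2*x))) / (b + Real.cosh (2*x))^2
def uu'' (b c x : ℝ) : ℝ :=
  4*c*b^2*(b*Real.cosh (2*x) + 2 - Real.cosh (2*x)^2) / (b + Real.cosh (2*x))^3
def vv'' (b x : ℝ) : ℝ :=
  4*b*Real.sinh (2*x)*(2 + b*Real.cosh (2*x) - b^2) / (b + Real.cosh (2*x))^3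
def UU (b c : ℝ) : ℝ → ℂ := fun x => (uu b c x : ℂ) + (vv b x : ℂ) * Complex.I

lemma hDpos {b : ℝ} (hb : 0 < b) (x : ℝ) : 0 < b + Real.cosh (2*x) :=
  add_pos hb (Real.cosh_pos _)

lemma hasDerivAt_K (x : ℝ) : HasDerivAt (fun x : ℝ => Real.cosh (2*x)) (2 * Real.sinh (2*x)) x := by
  simpa [mul_comm] using (HasDerivAt.cosh ((hasDerivAt_id x).const_mul 2))

lemma hasDerivAt_L (x : ℝ) : HasDerivAt (fun x : ℝ => Real.sinh (2*x)) (2 * Real.cosh (2*x)) x := by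
  simpa [mul_comm] using (HasDerivAt.sinh ((hasDerivAt_id x).const_mul 2))

lemma hasDerivAt_uu {b : ℝ} (hb : 0 < b) (c x : ℝ) :
    HasDerivAt (fun x => uu b c x) (uu' b c x) x := by
  have h := (((hasDerivAt_K x).const_mul (b*c)).div
      ((hasDerivAt_K x).const_add b) (hDpos hb x).ne')
  refine h.congr_deriv (Eq.symm ?_)
  unfold uu'
  have hs := Real.sinh_sq (2*x)
  field_simp
  ring

lemma hasDerivAt_vv {b : ℝ} (hb : 0 < b) (x : ℝ) :
    HasDerivAt (fun x => vv b x) (vv' b x) x := by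
  have h := ((((hasDerivAt_L x).const_mul b).neg).div
      ((hasDerivAt_K x).const_add b) (hDpos hb x).ne')
  refine h.congr_deriv (Eq.symm ?_)
  simp only [Pi.pow_apply, Pi.neg_apply, Nat.cast_ofNat]
  unfold vv'
  have hs := Real.sinh_sq (2*x)
  field_simp
  linear_combination (-1) * hs

lemma hasDerivAt_uu' {b : ℝ} (hb : 0 < b) (c x : ℝ) :
    HasDerivAt (fun x => uu' b c x) (uu'' b c x) x := by
  have h := (((hasDerivAt_L x).const_mul (2*c*b^2)).div
      (((hasDerivAt_K x).const_add b).pow 2) (pow_ne_zero 2 (hDpos hb x).ne'))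
  refine h.congr_deriv (Eq.symm ?_)
  simp only [Pi.pow_apply, Pi.neg_apply, Nat.cast_ofNat]
  unfold uu''
  have hs := Real.sinh_sq (2*x)
  field_simp
  linear_combination (8*b*c + 8*c*Real.cosh (2*x)) * hs

lemma hasDerivAt_vv' {b : ℝ} (hb : 0 < b) (x : ℝ) :
    HasDerivAt (fun x => vv' b x) (vv'' b x) x := by
  have h := ((((hasDerivAt_K x).const_mul b).const_add 1).const_mul (2*b)).neg.div
      (((hasDerivAt_K x).const_add b).pow 2) (pow_ne_zero 2 (hDpos hb x).ne')
  refine h.congr_deriv (Eq.symm ?_)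
  simp only [Pi.pow_apply, Pi.neg_apply, Nat.cast_ofNat]
  unfold vv''
  field_simp
  ring

lemma hasDerivAt_UU {b : ℝ} (hb : 0 < b) (c x : ℝ) :
    HasDerivAt (UU b c) ((uu' b c x : ℂ) + (vv' b x : ℂ) * Complex.I) x :=
  ((hasDerivAt_uu hb c x).ofReal_comp).add
    (((hasDerivAt_vv hb x).ofReal_comp).mul_const Complex.I)

lemma deriv_UU {b : ℝ} (hb : 0 < b) (c : ℝ) :
    deriv (UU b c) = fun x => (uu' b c x : ℂ) + (vv' b x : ℂ) * Complex.I :=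
  funext fun x => (hasDerivAt_UU hb c x).deriv

lemma deriv2_UU {b : ℝ} (hb : 0 < b) (c x : ℝ) :
    deriv (deriv (UU b c)) x = (uu'' b c x : ℂ) + (vv'' b x : ℂ) * Complex.I := by
  rw [deriv_UU hb c]
  exact (((hasDerivAt_uu' hb c x).ofReal_comp).add
    (((hasDerivAt_vv' hb x).ofReal_comp).mul_const Complex.I)).deriv

lemma normSq_UU {b c : ℝ} (hb : 0 < b) (hb2 : b^2*(1+c^2) = 1) (x : ℝ) :
    ‖UU b c x‖^2 = 1 - 2*b/(b + Real.cosh (2*x)) := by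
  have hD := hDpos hb x
  have hs := Real.sinh_sq (2*x)
  have h1 : ‖UU b c x‖^2 = uu b c x ^ 2 + vv b x ^ 2 := by
    rw [show ‖UU b c x‖^2 = Complex.normSq (UU b c x) from
      (Complex.sq_norm (UU b c x)).symm ▸ rfl]
    exact Complex.normSq_add_mul_I _ _
  rw [h1]
  unfold uu vv
  field_simp
  linear_combination b^2 * hs + Real.cosh (2*x)^2 * hb2


lemma ode_alg {b c S K : ℝ} (hD : 0 < b + K) (hs : S^2 = K^2 - 1) (hb2 : b^2*(1+c^2) = 1) :
    ((4*c*b^2*(b*K + 2 - K^2) / (b+K)^3 : ℝ) : ℂ) + ((4*b*S*(2 + b*K - b^2) / (b+K)^3 : ℝ) : ℂ) * Complex.I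
      - 2 * Complex.I * (c : ℂ) * ((2*b/(b+K) : ℝ) : ℂ)
        * (((2*c*b^2*S/(b+K)^2 : ℝ) : ℂ) + ((-(2*b*(1+b*K))/(b+K)^2 : ℝ) : ℂ) * Complex.I)
      + 2 * ((2*b/(b+K) : ℝ) : ℂ)
        * (((b*c*K/(b+K) : ℝ) : ℂ) + ((-(b*S)/(b+K) : ℝ) : ℂ) * Complex.I) = 0 := by
  have hsC : (S : ℂ)^2 = (K : ℂ)^2 - 1 := by exact_mod_cast congrArg (Complex.ofReal) hs
  have hb2C : (b : ℂ)^2*(1+(c:ℂ)^2) = 1 := by exact_mod_cast congrArg (Complex.ofReal) hb2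
  have hDC : (b : ℂ) + (K : ℂ) ≠ 0 := by
    rw [show ((b:ℂ) + (K:ℂ)) = ((b + K : ℝ) : ℂ) by push_cast; ring]
    exact Complex.ofReal_ne_zero.mpr hD.ne'
  simp only [Complex.ofReal_div, Complex.ofReal_mul, Complex.ofReal_add, Complex.ofReal_sub,
    Complex.ofReal_neg, Complex.ofReal_pow, Complex.ofReal_one, Complex.ofReal_ofNat]
  field_simp
  ring_nf
  simp only [Complex.I_sq]
  ring_nf
  linear_combination (-(8*(b:ℂ)) * (S:ℂ) * Complex.I) * hb2C

lemma ode_UU {b c : ℝ} (hb : 0 < b) (hb2 : b^2*(1+c^2) = 1) (x : ℝ) :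
    deriv (deriv (UU b c)) x
      - 2 * Complex.I * (c : ℂ) * ((1 - ‖UU b c x‖^2 : ℝ) : ℂ) * deriv (UU b c) x
      + 2 * ((1 - ‖UU b c x‖^2 : ℝ) : ℂ) * UU b c x = 0 := by
  have hD := hDpos hb x
  have heta : (1 - ‖UU b c x‖^2 : ℝ) = 2*b/(b + Real.cosh (2*x)) := by
    rw [normSq_UU hb hb2 x]; ring
  rw [deriv2_UU hb c x, deriv_UU hb c, heta]
  show ((uu'' b c x : ℝ) : ℂ) + ((vv'' b x : ℝ) : ℂ) * Complex.I - _ + _ = 0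
  unfold UU uu vv uu' vv' uu'' vv''
  exact ode_alg hD (Real.sinh_sq (2*x)) hb2

lemma contDiff_UU {b : ℝ} (hb : 0 < b) (c : ℝ) : ContDiff ℝ (⊤ : ℕ∞) (UU b c) := by
  have hK : ContDiff ℝ (⊤ : ℕ∞) (fun x : ℝ => Real.cosh (2*x)) := (contDiff_const.mul contDiff_id).cosh
  have hL : ContDiff ℝ (⊤ : ℕ∞) (fun x : ℝ => Real.sinh (2*x)) := (contDiff_const.mul contDiff_id).sinh
  have hD : ∀ x : ℝ, b + Real.cosh (2*x) ≠ 0 := fun x => (hDpos hb x).ne'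
  have hu : ContDiff ℝ (⊤ : ℕ∞) (fun x => uu b c x) :=
    (contDiff_const.mul hK).div (contDiff_const.add hK) hD
  have hv : ContDiff ℝ (⊤ : ℕ∞) (fun x => vv b x) :=
    ((contDiff_const.mul hL).neg).div (contDiff_const.add hK) hD
  exact (Complex.ofRealCLM.contDiff.comp hu).add
    ((Complex.ofRealCLM.contDiff.comp hv).mul contDiff_const)

lemma norm_UU_lt_one {b c : ℝ} (hb : 0 < b) (hb2 : b^2*(1+c^2) = 1) (x : ℝ) :
    ‖UU b c x‖ < 1 := by
  have h2 := normSq_UU hb hb2 x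
  have hD := hDpos hb x
  have hpos : 0 < 2*b/(b + Real.cosh (2*x)) := div_pos (by linarith) hD
  nlinarith [norm_nonneg (UU b c x)]

lemma tendsto_cosh_cocompact : Tendsto (fun x : ℝ => Real.cosh (2*x)) (cocompact ℝ) atTop := by
  rw [cocompact_eq_atBot_atTop, Filter.tendsto_sup]
  constructor
  · have h1 : Tendsto (fun x : ℝ => -(2*x)) atBot atTop := by
      have : Tendsto (fun x : ℝ => (2:ℝ)*x) atBot atBot := (tendsto_id (α := ℝ)).const_mul_atBot two_pos
      exact tendsto_neg_atBot_atTop.comp this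
    have h2 : Tendsto (fun x : ℝ => Real.exp (-(2*x)) / 2) atBot atTop :=
      (Real.tendsto_exp_atTop.comp h1).atTop_div_const two_pos
    refine tendsto_atTop_mono (fun x => ?_) h2
    rw [Real.cosh_eq]
    have := Real.exp_pos (2*x)
    linarith
  · have h1 : Tendsto (fun x : ℝ => (2:ℝ)*x) atTop atTop := (tendsto_id (α := ℝ)).const_mul_atTop two_pos
    have h2 : Tendsto (fun x : ℝ => Real.exp (2*x) / 2) atTop atTop :=
      (Real.tendsto_exp_atTop.comp h1).atTop_div_const two_pos
    refine tendsto_atTop_mono (fun x => ?_) h2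
    rw [Real.cosh_eq]
    have := Real.exp_pos (-(2*x))
    linarith

lemma tendsto_norm_UU {b c : ℝ} (hb : 0 < b) (hb2 : b^2*(1+c^2) = 1) :
    Tendsto (fun x => ‖UU b c x‖) (cocompact ℝ) (nhds 1) := by
  have hDinf : Tendsto (fun x : ℝ => b + Real.cosh (2*x)) (cocompact ℝ) atTop :=
    tendsto_atTop_add_const_left _ b tendsto_cosh_cocompact
  have h0 : Tendsto (fun x : ℝ => 2*b/(b + Real.cosh (2*x))) (cocompact ℝ) (nhds 0) :=
    Tendsto.div_atTop tendsto_const_nhds hDinf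
  have h1 : Tendsto (fun x => ‖UU b c x‖^2) (cocompact ℝ) (nhds 1) := by
    simp_rw [normSq_UU hb hb2]
    simpa using (tendsto_const_nhds (x := (1:ℝ)) (f := cocompact ℝ)).sub h0
  have heq : (fun x => ‖UU b c x‖) = fun x => Real.sqrt (‖UU b c x‖^2) :=
    funext fun x => (Real.sqrt_sq (norm_nonneg _)).symm
  rw [heq]
  have h3 := (Real.continuous_sqrt.tendsto 1).comp h1
  rw [Real.sqrt_one] at h3
  exact h3

/-- the mass density at c = 0 -/
def m0 (x : ℝ) : ℝ := (2/(1 + Real.cosh (2*x)))^2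

/-- antiderivative of m0 -/
def F0 (x : ℝ) : ℝ :=
  (2/3)*(Real.sinh (2*x)/(1+Real.cosh (2*x))^2 + Real.sinh (2*x)/(1+Real.cosh (2*x)))

lemma hEpos (x : ℝ) : 0 < 1 + Real.cosh (2*x) := add_pos one_pos (Real.cosh_pos _)

lemma hasDerivAt_F0 (x : ℝ) : HasDerivAt F0 (m0 x) x := by
  have hE := hEpos x
  have h1 := (hasDerivAt_L x).div (((hasDerivAt_K x).const_add 1).pow 2)
    (pow_ne_zero 2 hE.ne')
  have h2 := (hasDerivAt_L x).div ((hasDerivAt_K x).const_add 1) hE.ne'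
  have h := (h1.add h2).const_mul (2/3 : ℝ)
  refine h.congr_deriv (Eq.symm ?_)
  simp only [Pi.pow_apply, Pi.neg_apply, Nat.cast_ofNat]
  unfold m0
  have hs := Real.sinh_sq (2*x)
  field_simp
  linear_combination (Real.cosh (2*x)^2 + 4*Real.cosh (2*x) + 3) * hs

lemma F0_odd (x : ℝ) : F0 (-x) = -F0 x := by
  unfold F0
  rw [show 2*(-x) = -(2*x) by ring, Real.sinh_neg, Real.cosh_neg]
  ring

lemma F0_tendsto_top : Tendsto F0 atTop (nhds (2/3)) := by
  have hrep : ∀ x : ℝ, F0 x =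
      (2/3)*(2*Real.exp (-(2*x))*(1-Real.exp (-(2*x)))/(1+Real.exp (-(2*x)))^3
        + (1-Real.exp (-(2*x)))/(1+Real.exp (-(2*x)))) := by
    intro x
    have ht : 0 < Real.exp (-(2*x)) := Real.exp_pos _
    have h1 : Real.exp (2*x) * Real.exp (-(2*x)) = 1 := by
      rw [← Real.exp_add]; simp
    have hE := hEpos x
    unfold F0
    rw [Real.sinh_eq, Real.cosh_eq] at *
    field_simp
    linear_combination (2*Real.exp (2*x)*Real.exp (-(2*x))^2 + 6*Real.exp (2*x)*Real.exp (-(2*x))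
      + 2*Real.exp (-(2*x))^3 + 14*Real.exp (-(2*x))^2 + 20*Real.exp (-(2*x)) + 4) * h1
  rw [show F0 = _ from funext hrep]
  have ht0 : Tendsto (fun x : ℝ => Real.exp (-(2*x))) atTop (nhds 0) := by
    apply Real.tendsto_exp_atBot.comp
    have h1 : Tendsto (fun x : ℝ => (2:ℝ)*x) atTop atTop := (tendsto_id (α := ℝ)).const_mul_atTop two_pos
    exact tendsto_neg_atTop_atBot.comp h1
  have hcont : ContinuousAt (fun t : ℝ =>
      (2/3)*(2*t*(1-t)/(1+t)^3 + (1-t)/(1+t))) 0 := by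
    apply ContinuousAt.mul continuousAt_const
    apply ContinuousAt.add
    · exact ContinuousAt.div (by fun_prop) (by fun_prop) (by norm_num)
    · exact ContinuousAt.div (by fun_prop) (by fun_prop) (by norm_num)
  have := hcont.tendsto.comp ht0
  simpa [Function.comp_def] using this

lemma F0_tendsto_bot : Tendsto F0 atBot (nhds (-(2/3))) := by
  have h := (F0_tendsto_top.comp tendsto_neg_atBot_atTop).neg
  have heq : (fun x : ℝ => -(F0 (-x))) = F0 := funext fun x => by
    rw [F0_odd]; ring
  simpa [Function.comp, heq] using h

lemma cosh_lower_exp (x : ℝ) : Real.exp (2*|x|) ≤ 2*Real.cosh (2*x) := by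
  rw [Real.cosh_eq]
  rcases abs_cases x with ⟨h,_⟩|⟨h,_⟩ <;> rw [h]
  · have := Real.exp_pos (-(2*x)); linarith
  · have := Real.exp_pos (2*x)
    have : Real.exp (2*(-x)) = Real.exp (-(2*x)) := by ring_nf
    rw [this]
    have := Real.exp_pos (2*x); linarith

lemma G_integrable : Integrable (fun x : ℝ => 16 * Real.exp (-(4*|x|))) := by
  rw [← integrableOn_univ, ← Set.Iic_union_Ioi (a := (0:ℝ))]
  apply IntegrableOn.union
  · refine ((integrableOn_exp_Iic 0).const_mul 16).mono' ?_ ?_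
    · exact (Continuous.aestronglyMeasurable (by fun_prop)).restrict
    · refine (ae_restrict_iff' measurableSet_Iic).mpr (ae_of_all _ fun x hx => ?_)
      have hx0 : x ≤ 0 := hx
      rw [Real.norm_eq_abs, abs_of_nonneg (by positivity), abs_of_nonpos hx0]
      have : -(4*(-x)) ≤ x := by linarith
      have := Real.exp_le_exp.mpr this
      nlinarith [Real.exp_pos x]
  · have h : IntegrableOn (fun x : ℝ => 16 * Real.exp (-4*x)) (Set.Ioi 0) :=
      (exp_neg_integrableOn_Ioi 0 (show (0:ℝ) < 4 by norm_num)).const_mul 16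
    refine h.congr_fun (fun x hx => ?_) measurableSet_Ioi
    have hx0 : (0:ℝ) < x := hx
    rw [abs_of_pos hx0]
    ring_nf

lemma sq_div_bound {b : ℝ} (hb : 0 < b) (hb1 : b ≤ 1) (x : ℝ) :
    (2*b/(b+Real.cosh (2*x)))^2 ≤ 16*Real.exp (-(4*|x|)) := by
  have hK1 : 1 ≤ Real.cosh (2*x) := Real.one_le_cosh _
  have hK0 : 0 < Real.cosh (2*x) := Real.cosh_pos _
  have hD := hDpos hb x
  have h1 : (2*b/(b+Real.cosh (2*x)))^2 ≤ (2/Real.cosh (2*x))^2 := by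
    rw [div_pow, div_pow, div_le_div_iff₀ (by positivity) (by positivity)]
    have key : b*Real.cosh (2*x) ≤ b + Real.cosh (2*x) := by nlinarith
    nlinarith [mul_self_le_mul_self (by positivity : (0:ℝ) ≤ b*Real.cosh (2*x)) key]
  refine h1.trans ?_
  rw [Real.exp_neg, ← div_eq_mul_inv, div_pow]
  rw [div_le_div_iff₀ (by positivity) (Real.exp_pos _)]
  have h2 : Real.exp (4*|x|) = Real.exp (2*|x|)^2 := by
    rw [← Real.exp_nat_mul]
    norm_num
    ring_nf
  have h3 := cosh_lower_exp x
  nlinarith [Real.exp_pos (2*|x|)]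

end DarkSolitonAux

/-- Expansion of the mass of the dark soliton: `M(U_c) = ∫ (1-|U_c|²)² = 4/3 + O(c²)`. -/
theorem stmt_14 :
    ∃ c₀ : ℝ, 0 < c₀ ∧ ∃ C : ℝ, 0 < C ∧ ∀ c : ℝ, |c| < c₀ →
      ∃ U : ℝ → ℂ, ContDiff ℝ (⊤ : ℕ∞) U ∧
        (∀ ξ : ℝ, ‖U ξ‖ < 1) ∧
        Tendsto (fun ξ : ℝ => ‖U ξ‖) (cocompact ℝ) (nhds 1) ∧
        (∀ ξ : ℝ, deriv (deriv U) ξ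
            - 2 * Complex.I * (c : ℂ) * ((1 - ‖U ξ‖^2 : ℝ) : ℂ) * deriv U ξ
            + 2 * ((1 - ‖U ξ‖^2 : ℝ) : ℂ) * U ξ = 0) ∧
        Integrable (fun ξ : ℝ => (1 - ‖U ξ‖^2)^2) volume ∧
        |(∫ ξ : ℝ, (1 - ‖U ξ‖^2)^2) - 4/3| ≤ C * c^2 := by
  refine ⟨1, one_pos, 3, by norm_num, fun c hc => ?_⟩
  have hc2 : c^2 < 1 := by
    have h := abs_lt.mp hc
    nlinarith [h.1, h.2]
  obtain ⟨b, hb, hb2, hb1, hbc⟩ :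
      ∃ b : ℝ, 0 < b ∧ b^2*(1+c^2) = 1 ∧ b ≤ 1 ∧ 1 - b ≤ c^2/2 := by
    set s := Real.sqrt (1 + c^2) with hsdef
    have hspos : 0 < s := Real.sqrt_pos.mpr (by positivity)
    have hs2 : s^2 = 1 + c^2 := Real.sq_sqrt (by positivity)
    have hs1 : 1 ≤ s := by nlinarith [sq_nonneg c]
    refine ⟨s⁻¹, inv_pos.mpr hspos, ?_, ?_, ?_⟩
    · rw [← hs2]; field_simp
    · rw [inv_le_one_iff₀]; right; exact hs1
    · have hbs : s⁻¹ * s = 1 := inv_mul_cancel₀ hspos.ne'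
      have hbpos : 0 < s⁻¹ := inv_pos.mpr hspos
      nlinarith [sq_nonneg (s*(2-c^2)-2), sq_nonneg c, sq_nonneg (c*c),
        mul_nonneg (mul_nonneg (sq_nonneg c) (sq_nonneg c)) (sub_pos.mpr hc2).le,
        mul_pos hbpos hspos]
  have hrw : (fun ξ : ℝ => (1 - ‖UU b c ξ‖^2)^2)
        = fun ξ => (2*b/(b+Real.cosh (2*ξ)))^2 := by
      funext ξ
      rw [normSq_UU hb hb2 ξ]
      ring
  have hcont : Continuous (fun ξ : ℝ => (2*b/(b+Real.cosh (2*ξ)))^2) := by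
      apply Continuous.pow
      exact continuous_const.div (continuous_const.add (by fun_prop))
        (fun x => (hDpos hb x).ne')
  have hcont0 : Continuous m0 := by
      unfold m0
      apply Continuous.pow
      exact continuous_const.div (continuous_const.add (by fun_prop))
        (fun x => (hEpos x).ne')
  have hIc : Integrable (fun ξ : ℝ => (2*b/(b+Real.cosh (2*ξ)))^2) := by
      refine G_integrable.mono' hcont.aestronglyMeasurable (ae_of_all _ fun x => ?_)
      rw [Real.norm_eq_abs, abs_of_nonneg (sq_nonneg _)]
      exact sq_div_bound hb hb1 x
  have hI0 : Integrable m0 := by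
      refine G_integrable.mono' hcont0.aestronglyMeasurable (ae_of_all _ fun x => ?_)
      rw [Real.norm_eq_abs, abs_of_nonneg (sq_nonneg _)]
      have := sq_div_bound one_pos le_rfl x
      unfold m0
      calc (2/(1 + Real.cosh (2*x)))^2 = (2*1/(1+Real.cosh (2*x)))^2 := by norm_num
        _ ≤ 16*Real.exp (-(4*|x|)) := sq_div_bound one_pos le_rfl x
  have hintm0 : ∫ x : ℝ, m0 x = 4/3 := by
      rw [MeasureTheory.integral_of_hasDerivAt_of_tendsto hasDerivAt_F0 hI0
        F0_tendsto_bot F0_tendsto_top]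
      norm_num
  have hle : ∀ x : ℝ, (2*b/(b+Real.cosh (2*x)))^2 ≤ m0 x := by
      intro x
      unfold m0
      have hK1 : 1 ≤ Real.cosh (2*x) := Real.one_le_cosh _
      have hD := hDpos hb x
      have hE := hEpos x
      rw [div_pow, div_pow, div_le_div_iff₀ (by positivity) (by positivity)]
      have key : b*(1+Real.cosh (2*x)) ≤ b + Real.cosh (2*x) := by
        nlinarith [mul_nonneg (sub_nonneg.mpr hb1) (Real.cosh_pos (2*x)).le]
      have key2 := mul_self_le_mul_self (by positivity : (0:ℝ) ≤ b*(1+Real.cosh (2*x))) key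
      nlinarith [key2]
  have hge : ∀ x : ℝ, m0 x - (2*b/(b+Real.cosh (2*x)))^2 ≤ 2*c^2 * m0 x := by
      intro x
      unfold m0
      have hK1 : 1 ≤ Real.cosh (2*x) := Real.one_le_cosh _
      have hK0 : 0 < Real.cosh (2*x) := Real.cosh_pos _
      have hD := hDpos hb x
      have hE := hEpos x
      rw [div_pow, div_pow]
      rw [div_sub_div _ _ (by positivity : ((1:ℝ)+Real.cosh (2*x))^2 ≠ 0)
        (by positivity : (b+Real.cosh (2*x))^2 ≠ 0)]
      rw [show 2*c^2 * (2^2/(1+Real.cosh (2*x))^2) = (8*c^2)/(1+Real.cosh (2*x))^2 by ring]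
      rw [div_le_div_iff₀ (by positivity) (by positivity)]
      have e2 : (1-b)*(Real.cosh (2*x)*(2*b+(1+b)*Real.cosh (2*x)))
          ≤ (c^2/2)*(Real.cosh (2*x)*(2*b+(1+b)*Real.cosh (2*x))) :=
        mul_le_mul_of_nonneg_right (by linarith) (by positivity)
      have e3 : Real.cosh (2*x)*(2*b+(1+b)*Real.cosh (2*x)) ≤ 4*Real.cosh (2*x)^2 := by
        nlinarith [mul_le_mul_of_nonneg_left hK1 hK0.le]
      have e4 : Real.cosh (2*x)^2 ≤ (b+Real.cosh (2*x))^2 := by nlinarith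
      have m3 := mul_le_mul_of_nonneg_left e3 (by positivity : (0:ℝ) ≤ c^2/2)
      have main : 2^2*(b+Real.cosh (2*x))^2 - (1+Real.cosh (2*x))^2*(2*b)^2
          ≤ 8*c^2*(b+Real.cosh (2*x))^2 := by
        calc 2^2*(b+Real.cosh (2*x))^2 - (1+Real.cosh (2*x))^2*(2*b)^2
            = 4*((1-b)*(Real.cosh (2*x)*(2*b+(1+b)*Real.cosh (2*x)))) := by ring
          _ ≤ 4*((c^2/2)*(Real.cosh (2*x)*(2*b+(1+b)*Real.cosh (2*x)))) := by linarith [e2]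
          _ ≤ 4*((c^2/2)*(4*Real.cosh (2*x)^2)) := by linarith [m3]
          _ ≤ 8*c^2*(b+Real.cosh (2*x))^2 := by
              nlinarith [mul_nonneg (sq_nonneg c) (sub_nonneg.mpr e4)]
      have hfin := mul_le_mul_of_nonneg_right main
        (by positivity : (0:ℝ) ≤ (1+Real.cosh (2*x))^2)
      exact hfin.trans_eq (by ring)
  have h1 : ∫ x : ℝ, (2*b/(b+Real.cosh (2*x)))^2 ≤ ∫ x : ℝ, m0 x :=
    integral_mono hIc hI0 hle
  have h3 : ∫ x : ℝ, (m0 x - (2*b/(b+Real.cosh (2*x)))^2) ≤ ∫ x : ℝ, 2*c^2 * m0 x :=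
    integral_mono (hI0.sub hIc) (hI0.const_mul _) hge
  rw [integral_sub hI0 hIc, integral_const_mul, hintm0] at h3
  rw [hintm0] at h1
  refine ⟨UU b c, contDiff_UU hb c, fun ξ => norm_UU_lt_one hb hb2 ξ, tendsto_norm_UU hb hb2,
    fun ξ => ode_UU hb hb2 ξ, ?_, ?_⟩
  · rw [hrw]; exact hIc
  · rw [hrw, abs_le]
    constructor
    · nlinarith [sq_nonneg c]
    · nlinarith [sq_nonneg c]
end
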